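/- arXiv:2010.01306 — 6 statements merged into one kernel-verified Lean document; each statement's English description precedes it below -/
import Mathlib

section
/- In the single-item uncapacitated lot-sizing relaxation for a facility i, the (l,S)-inequality holds: for any period l, any subset S of {1,...,l}, and any feasible solution (x, s, y) with s_0 = 0, inventory balance s_{t-1} + x_t = d_t + s_t for all t, nonnegativity of x and s, and the setup condition x_t ≤ (d_t + d_{t+1} + ... + d_{NT}) · y_t with y_t ∈ {0,1}, one has Σ_{k ∈ {1,...,l}\S} x_k + Σ_{k ∈ S} (d_k + ... + d_l) · y_k ≥ d_1 + ... + d_l. -/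
/-!
Let `p` be the last period before the first `k ∈ S` with a setup (`p = l` if there is none).
Every `k ∈ S` with `k ≤ p` has `y k = 0`, hence `x k = 0`, so the first sum dominates the
cumulative production `x(1..p) = d(1..p) + s p ≥ d(1..p)`. If `p < l`, the setup in `p + 1 ∈ S`
contributes `d(p+1..l)` to the second sum; together these cover `d(1..l)`.
-/

open Finset

theorem sum_Icc_one_add_sum_Icc_succ {M : Type*} [AddCommMonoid M] (f : ℕ → M) {p l : ℕ}
    (hpl : p ≤ l) : ∑ k ∈ Icc 1 p, f k + ∑ k ∈ Icc (p + 1) l, f k = ∑ k ∈ Icc 1 l, f k := by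
  simpa only [← Icc_add_one_left_eq_Ioc, zero_add] using
    sum_Ioc_consecutive f (Nat.zero_le p) hpl

theorem sum_Icc_one_eq_sum_Icc_one_add_of_balance {M : Type*} [AddCommGroup M]
    {d x s : ℕ → M} {m : ℕ} (hs0 : s 0 = 0)
    (hbal : ∀ t ∈ Icc 1 m, s (t - 1) + x t = d t + s t) :
    ∑ t ∈ Icc 1 m, x t = ∑ t ∈ Icc 1 m, d t + s m := by
  induction m with
  | zero => simp [hs0]
  | succ n ih =>
    have hb := hbal (n + 1) (by simp)
    rw [Nat.add_sub_cancel] at hb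
    rw [sum_Icc_succ_top (by omega), sum_Icc_succ_top (by omega),
      ih fun t ht => hbal t (Icc_subset_Icc_right n.le_succ ht), add_assoc, hb, add_assoc]

theorem exists_forall_lt_of_subset_Icc_one {T : Finset ℕ} {l : ℕ} (hT : T ⊆ Icc 1 l) :
    ∃ p ≤ l, (∀ k ∈ T, p < k) ∧ (p < l → p + 1 ∈ T) := by
  rcases T.eq_empty_or_nonempty with rfl | hne
  · exact ⟨l, le_rfl, by simp, fun h => absurd h (lt_irrefl l)⟩
  · have hmin := mem_Icc.mp (hT (T.min'_mem hne))
    refine ⟨T.min' hne - 1, by omega, fun k hk => ?_, fun _ => ?_⟩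
    · have := T.min'_le k hk
      omega
    · rw [Nat.sub_add_cancel hmin.1]
      exact T.min'_mem hne

theorem sum_le_sum_sdiff_of_eq_zero {ι M : Type*} [DecidableEq ι]
    [AddCommMonoid M] [PartialOrder M] [IsOrderedAddMonoid M]
    {f : ι → M} {A B S : Finset ι} (hBA : B ⊆ A) (hf : ∀ i ∈ A \ S, 0 ≤ f i)
    (hfS : ∀ i ∈ B ∩ S, f i = 0) :
    ∑ i ∈ B, f i ≤ ∑ i ∈ A \ S, f i := by
  calc ∑ i ∈ B, f i = ∑ i ∈ B \ S, f i :=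
        (sum_subset sdiff_subset fun i hiB hi => hfS i <| by
          simpa [hiB] using hi).symm
    _ ≤ ∑ i ∈ A \ S, f i :=
        sum_le_sum_of_subset_of_nonneg (sdiff_subset_sdiff hBA le_rfl) fun i hi _ => hf i hi

theorem sum_demand_le_sum_production_sdiff {NT l p : ℕ} {d x s : ℕ → ℝ} {S : Finset ℕ}
    (hs0 : s 0 = 0) (hbal : ∀ t ∈ Icc 1 NT, s (t - 1) + x t = d t + s t)
    (hx : ∀ t ∈ Icc 1 NT, 0 ≤ x t) (hs : ∀ t ∈ Icc 1 NT, 0 ≤ s t)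
    (hpl : p ≤ l) (hlNT : l ≤ NT) (hidle : ∀ k ∈ S, k ≤ p → x k = 0) :
    ∑ k ∈ Icc 1 p, d k ≤ ∑ k ∈ Icc 1 l \ S, x k := by
  have hl_sub : Icc 1 l ⊆ Icc 1 NT := Icc_subset_Icc_right hlNT
  have hp_sub : Icc 1 p ⊆ Icc 1 NT := (Icc_subset_Icc_right hpl).trans hl_sub
  have hstock : 0 ≤ s p := by
    rcases Nat.eq_zero_or_pos p with rfl | hp
    · exact hs0.ge
    · exact hs p (hp_sub (mem_Icc.mpr ⟨hp, le_rfl⟩))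
  have hx_le : ∑ k ∈ Icc 1 p, x k ≤ ∑ k ∈ Icc 1 l \ S, x k := by
    refine sum_le_sum_sdiff_of_eq_zero (Icc_subset_Icc_right hpl)
      (fun k hk => hx k (hl_sub (mem_sdiff.mp hk).1)) fun k hk =>
      hidle k (mem_inter.mp hk).2 (mem_Icc.mp (mem_inter.mp hk).1).2
  rw [sum_Icc_one_eq_sum_Icc_one_add_of_balance hs0 fun t ht => hbal t (hp_sub ht)] at hx_le
  linarith

theorem sum_demand_le_sum_setup {NT l p : ℕ} {d y : ℕ → ℝ} {S : Finset ℕ}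
    (hd : ∀ t ∈ Icc 1 NT, 0 ≤ d t) (hy : ∀ t ∈ Icc 1 NT, y t = 0 ∨ y t = 1)
    (hS : S ⊆ Icc 1 l) (hpl : p ≤ l) (hlNT : l ≤ NT)
    (hfirst : p < l → p + 1 ∈ S ∧ y (p + 1) = 1) :
    ∑ j ∈ Icc (p + 1) l, d j ≤ ∑ k ∈ S, (∑ j ∈ Icc k l, d j) * y k := by
  have hSNT : S ⊆ Icc 1 NT := hS.trans (Icc_subset_Icc_right hlNT)
  have hterm_nonneg : ∀ k ∈ S, 0 ≤ (∑ j ∈ Icc k l, d j) * y k := fun k hk => by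
    refine mul_nonneg (sum_nonneg fun j hj => hd j ?_) ?_
    · have hkl := mem_Icc.mp (hS hk)
      simp only [mem_Icc] at hj ⊢
      omega
    · rcases hy k (hSNT hk) with h | h <;> simp [h]
  rcases hpl.lt_or_eq with hlt | rfl
  · obtain ⟨hpS, hy1⟩ := hfirst hlt
    simpa [hy1] using single_le_sum hterm_nonneg hpS
  · simpa using sum_nonneg hterm_nonneg

/-- The `(l,S)`-inequality is valid for the uncapacitated single-item lot-sizing set. -/
theorem lS_inequality_valid
    (NT : ℕ) (d x s y : ℕ → ℝ)
    (hd : ∀ t ∈ Icc 1 NT, 0 ≤ d t)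
    (hs0 : s 0 = 0)
    (hbal : ∀ t ∈ Icc 1 NT, s (t - 1) + x t = d t + s t)
    (hx : ∀ t ∈ Icc 1 NT, 0 ≤ x t)
    (hs : ∀ t ∈ Icc 1 NT, 0 ≤ s t)
    (hy : ∀ t ∈ Icc 1 NT, y t = 0 ∨ y t = 1)
    (hsetup : ∀ t ∈ Icc 1 NT, x t ≤ (∑ j ∈ Icc t NT, d j) * y t)
    (l : ℕ) (hl : l ∈ Icc 1 NT) (S : Finset ℕ) (hS : S ⊆ Icc 1 l) :
    ∑ k ∈ Icc 1 l \ S, x k + ∑ k ∈ S, (∑ j ∈ Icc k l, d j) * y k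
      ≥ ∑ k ∈ Icc 1 l, d k := by
  have hlNT : l ≤ NT := (mem_Icc.mp hl).2
  have hSNT : S ⊆ Icc 1 NT := hS.trans (Icc_subset_Icc_right hlNT)
  obtain ⟨p, hpl, hbefore, hfirst⟩ :=
    exists_forall_lt_of_subset_Icc_one ((filter_subset (y · ≠ 0) S).trans hS)
  have hidle : ∀ k ∈ S, k ≤ p → x k = 0 := fun k hk hkp => by
    have hyk : y k = 0 := by
      by_contra hne
      exact absurd (hbefore k (mem_filter.mpr ⟨hk, hne⟩)) (not_lt.mpr hkp)
    have hsetup_k := hsetup k (hSNT hk)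
    rw [hyk, mul_zero] at hsetup_k
    exact le_antisymm hsetup_k (hx k (hSNT hk))
  have hsetup_first : p < l → p + 1 ∈ S ∧ y (p + 1) = 1 := fun hlt => by
    obtain ⟨hpS, hy0⟩ := mem_filter.mp (hfirst hlt)
    exact ⟨hpS, (hy _ (hSNT hpS)).resolve_left hy0⟩
  have hprod := sum_demand_le_sum_production_sdiff hs0 hbal hx hs hpl hlNT hidle
  have hsetups := sum_demand_le_sum_setup hd hy hS hpl hlNT hsetup_first
  have hsplit := sum_Icc_one_add_sum_Icc_succ d hpl
  linarith
end

section
/- The optimal value of the linear relaxation of the standard formulation strengthened with the single-level, two-level, and three-level valid inequalities (STD+) is at most the optimal value of the linear relaxation of the extended three-level formulation strengthened with its corresponding single-level, two-level, and three-level inequalities (3LF+): z_STD+ ≤ z_3LF+. -/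
open Finset

/-- Data of an instance of the uncapacitated three-level lot-sizing and
replenishment problem with a distribution structure. -/
structure LSData where
  W : Type
  R : Type
  fW : Fintype W
  fR : Fintype R
  deW : DecidableEq W
  wOf : R → W
  NT : ℕ
  d : R → ℕ → ℝ
  scP : ℕ → ℝ
  hcP : ℕ → ℝ
  scW : W → ℕ → ℝ
  hcW : W → ℕ → ℝ
  scR : R → ℕ → ℝ
  hcR : R → ℕ → ℝ

attribute [instance] LSData.fW LSData.fR LSData.deW

/-- Retailers served by warehouse `w`. -/
def LSData.ret (I : LSData) (w : I.W) : Finset I.R :=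
  Finset.univ.filter (fun r => I.wOf r = w)

/-- Cumulative demand of retailer `r` over periods `k..l`. -/
def LSData.dcR (I : LSData) (r : I.R) (k l : ℕ) : ℝ := ∑ j ∈ Icc k l, I.d r j

/-- Cumulative derived demand of warehouse `w` over periods `k..l`. -/
def LSData.dcW (I : LSData) (w : I.W) (k l : ℕ) : ℝ := ∑ r ∈ I.ret w, I.dcR r k l

/-- Cumulative derived demand of the plant over periods `k..l`. -/
def LSData.dcP (I : LSData) (k l : ℕ) : ℝ := ∑ r, I.dcR r k l

/-- A point in the variable space of the standard formulation. -/
structure STDPoint (I : LSData) where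
  xP : ℕ → ℝ
  sP : ℕ → ℝ
  yP : ℕ → ℝ
  xW : I.W → ℕ → ℝ
  sW : I.W → ℕ → ℝ
  yW : I.W → ℕ → ℝ
  xR : I.R → ℕ → ℝ
  sR : I.R → ℕ → ℝ
  yR : I.R → ℕ → ℝ

/-- Feasibility for the LP relaxation of the standard formulation STD. -/
def STDFeasLP (I : LSData) (p : STDPoint I) : Prop :=
  p.sP 0 = 0 ∧ (∀ w, p.sW w 0 = 0) ∧ (∀ r, p.sR r 0 = 0) ∧
  (∀ t ∈ Icc 1 I.NT, p.sP (t - 1) + p.xP t = (∑ w, p.xW w t) + p.sP t) ∧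
  (∀ w, ∀ t ∈ Icc 1 I.NT,
    p.sW w (t - 1) + p.xW w t = (∑ r ∈ I.ret w, p.xR r t) + p.sW w t) ∧
  (∀ r, ∀ t ∈ Icc 1 I.NT, p.sR r (t - 1) + p.xR r t = I.d r t + p.sR r t) ∧
  (∀ t ∈ Icc 1 I.NT, p.xP t ≤ I.dcP t I.NT * p.yP t) ∧
  (∀ w, ∀ t ∈ Icc 1 I.NT, p.xW w t ≤ I.dcW w t I.NT * p.yW w t) ∧
  (∀ r, ∀ t ∈ Icc 1 I.NT, p.xR r t ≤ I.dcR r t I.NT * p.yR r t) ∧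
  (∀ t ∈ Icc 1 I.NT, 0 ≤ p.xP t ∧ 0 ≤ p.sP t ∧ 0 ≤ p.yP t ∧ p.yP t ≤ 1) ∧
  (∀ w, ∀ t ∈ Icc 1 I.NT, 0 ≤ p.xW w t ∧ 0 ≤ p.sW w t ∧ 0 ≤ p.yW w t ∧ p.yW w t ≤ 1) ∧
  (∀ r, ∀ t ∈ Icc 1 I.NT, 0 ≤ p.xR r t ∧ 0 ≤ p.sR r t ∧ 0 ≤ p.yR r t ∧ p.yR r t ≤ 1)

/-- The single-level valid inequalities for the standard formulation. -/
def STDSingle (I : LSData) (p : STDPoint I) : Prop :=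
  (∀ l ∈ Icc 1 I.NT, ∀ S ⊆ Icc 1 l,
    ∑ k ∈ Icc 1 l \ S, p.xP k + ∑ k ∈ S, I.dcP k l * p.yP k ≥ I.dcP 1 l) ∧
  (∀ w, ∀ l ∈ Icc 1 I.NT, ∀ S ⊆ Icc 1 l,
    ∑ k ∈ Icc 1 l \ S, p.xW w k + ∑ k ∈ S, I.dcW w k l * p.yW w k ≥ I.dcW w 1 l) ∧
  (∀ r, ∀ l ∈ Icc 1 I.NT, ∀ S ⊆ Icc 1 l,
    ∑ k ∈ Icc 1 l \ S, p.xR r k + ∑ k ∈ S, I.dcR r k l * p.yR r k ≥ I.dcR r 1 l)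

/-- The two-level valid inequalities for the standard formulation. -/
def STDTwo (I : LSData) (p : STDPoint I) : Prop :=
  (∀ l ∈ Icc 2 I.NT, ∀ li, 1 ≤ li → li < l → ∀ Sp ⊆ Icc 1 li,
    ∀ Sw : I.W → Finset ℕ, (∀ w, Sw w ⊆ Icc (li + 1) l) →
    ∑ k ∈ Icc 1 li \ Sp, p.xP k + ∑ k ∈ Sp, I.dcP k l * p.yP k
      + ∑ w, (∑ k ∈ Icc (li + 1) l \ Sw w, p.xW w k + ∑ k ∈ Sw w, I.dcW w k l * p.yW w k)
      ≥ I.dcP 1 l) ∧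
  (∀ l ∈ Icc 2 I.NT, ∀ li, 1 ≤ li → li < l → ∀ Sp ⊆ Icc 1 li,
    ∀ Sr : I.R → Finset ℕ, (∀ r, Sr r ⊆ Icc (li + 1) l) →
    ∑ k ∈ Icc 1 li \ Sp, p.xP k + ∑ k ∈ Sp, I.dcP k l * p.yP k
      + ∑ r, (∑ k ∈ Icc (li + 1) l \ Sr r, p.xR r k + ∑ k ∈ Sr r, I.dcR r k l * p.yR r k)
      ≥ I.dcP 1 l) ∧
  (∀ w, ∀ l ∈ Icc 2 I.NT, ∀ li, 1 ≤ li → li < l → ∀ Sw ⊆ Icc 1 li,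
    ∀ Sr : I.R → Finset ℕ, (∀ r, Sr r ⊆ Icc (li + 1) l) →
    ∑ k ∈ Icc 1 li \ Sw, p.xW w k + ∑ k ∈ Sw, I.dcW w k l * p.yW w k
      + ∑ r ∈ I.ret w,
          (∑ k ∈ Icc (li + 1) l \ Sr r, p.xR r k + ∑ k ∈ Sr r, I.dcR r k l * p.yR r k)
      ≥ I.dcW w 1 l)

/-- The three-level valid inequalities for the standard formulation. -/
def STDThree (I : LSData) (p : STDPoint I) : Prop :=
  ∀ l ∈ Icc 3 I.NT, ∀ lp lw, 1 ≤ lp → lp + 2 ≤ l → lp < lw → lw + 1 ≤ l →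
    ∀ Sp ⊆ Icc 1 lp,
    ∀ Sw : I.W → Finset ℕ, (∀ w, Sw w ⊆ Icc (lp + 1) lw) →
    ∀ Sr : I.R → Finset ℕ, (∀ r, Sr r ⊆ Icc (lw + 1) l) →
    ∑ k ∈ Icc 1 lp \ Sp, p.xP k + ∑ k ∈ Sp, I.dcP k l * p.yP k
      + ∑ w, (∑ k ∈ Icc (lp + 1) lw \ Sw w, p.xW w k + ∑ k ∈ Sw w, I.dcW w k l * p.yW w k)
      + ∑ r, (∑ k ∈ Icc (lw + 1) l \ Sr r, p.xR r k + ∑ k ∈ Sr r, I.dcR r k l * p.yR r k)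
      ≥ I.dcP 1 l

/-- Objective function of the standard formulation. -/
def STDObj (I : LSData) (p : STDPoint I) : ℝ :=
  ∑ t ∈ Icc 1 I.NT,
    (I.scP t * p.yP t + (∑ w, I.scW w t * p.yW w t) + (∑ r, I.scR r t * p.yR r t)
      + I.hcP t * p.sP t + (∑ w, I.hcW w t * p.sW w t) + (∑ r, I.hcR r t * p.sR r t))

/-- A point in the variable space of the extended three-level formulation 3LF. -/
structure TLFPoint (I : LSData) where
  x0 : I.R → ℕ → ℝ
  x1 : I.R → ℕ → ℝ
  x2 : I.R → ℕ → ℝ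
  s0 : I.R → ℕ → ℝ
  s1 : I.R → ℕ → ℝ
  s2 : I.R → ℕ → ℝ
  yP : ℕ → ℝ
  yW : I.W → ℕ → ℝ
  yR : I.R → ℕ → ℝ

/-- Feasibility for the LP relaxation of the extended formulation 3LF. -/
def TLFFeasLP (I : LSData) (q : TLFPoint I) : Prop :=
  (∀ r, q.s0 r 0 = 0 ∧ q.s1 r 0 = 0 ∧ q.s2 r 0 = 0) ∧
  (∀ r, ∀ t ∈ Icc 1 I.NT, q.s0 r (t - 1) + q.x0 r t = q.x1 r t + q.s0 r t) ∧
  (∀ r, ∀ t ∈ Icc 1 I.NT, q.s1 r (t - 1) + q.x1 r t = q.x2 r t + q.s1 r t) ∧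
  (∀ r, ∀ t ∈ Icc 1 I.NT, q.s2 r (t - 1) + q.x2 r t = I.d r t + q.s2 r t) ∧
  (∀ r, ∀ t ∈ Icc 1 I.NT, q.x0 r t ≤ I.dcR r t I.NT * q.yP t) ∧
  (∀ r, ∀ t ∈ Icc 1 I.NT, q.x1 r t ≤ I.dcR r t I.NT * q.yW (I.wOf r) t) ∧
  (∀ r, ∀ t ∈ Icc 1 I.NT, q.x2 r t ≤ I.dcR r t I.NT * q.yR r t) ∧
  (∀ r, ∀ t ∈ Icc 1 I.NT,
    0 ≤ q.x0 r t ∧ 0 ≤ q.x1 r t ∧ 0 ≤ q.x2 r t ∧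
    0 ≤ q.s0 r t ∧ 0 ≤ q.s1 r t ∧ 0 ≤ q.s2 r t) ∧
  (∀ t ∈ Icc 1 I.NT, 0 ≤ q.yP t ∧ q.yP t ≤ 1) ∧
  (∀ w, ∀ t ∈ Icc 1 I.NT, 0 ≤ q.yW w t ∧ q.yW w t ≤ 1) ∧
  (∀ r, ∀ t ∈ Icc 1 I.NT, 0 ≤ q.yR r t ∧ q.yR r t ≤ 1)

/-- The per-retailer single-level inequalities for 3LF. -/
def TLFSingle (I : LSData) (q : TLFPoint I) : Prop :=
  ∀ r, ∀ l ∈ Icc 1 I.NT, ∀ S ⊆ Icc 1 l,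
    (∑ k ∈ Icc 1 l \ S, q.x0 r k + ∑ k ∈ S, I.dcR r k l * q.yP k ≥ I.dcR r 1 l) ∧
    (∑ k ∈ Icc 1 l \ S, q.x1 r k + ∑ k ∈ S, I.dcR r k l * q.yW (I.wOf r) k ≥ I.dcR r 1 l) ∧
    (∑ k ∈ Icc 1 l \ S, q.x2 r k + ∑ k ∈ S, I.dcR r k l * q.yR r k ≥ I.dcR r 1 l)

/-- The per-retailer two-level inequalities for 3LF. -/
def TLFTwo (I : LSData) (q : TLFPoint I) : Prop :=
  ∀ r, ∀ l ∈ Icc 2 I.NT, ∀ lb, 1 ≤ lb → lb < l →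
    ∀ Sb ⊆ Icc 1 lb, ∀ Sb' ⊆ Icc (lb + 1) l,
    (∑ k ∈ Icc 1 lb \ Sb, q.x0 r k + ∑ k ∈ Sb, I.dcR r k l * q.yP k
      + ∑ k ∈ Icc (lb + 1) l \ Sb', q.x1 r k
      + ∑ k ∈ Sb', I.dcR r k l * q.yW (I.wOf r) k ≥ I.dcR r 1 l) ∧
    (∑ k ∈ Icc 1 lb \ Sb, q.x0 r k + ∑ k ∈ Sb, I.dcR r k l * q.yP k
      + ∑ k ∈ Icc (lb + 1) l \ Sb', q.x2 r k
      + ∑ k ∈ Sb', I.dcR r k l * q.yR r k ≥ I.dcR r 1 l) ∧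
    (∑ k ∈ Icc 1 lb \ Sb, q.x1 r k + ∑ k ∈ Sb, I.dcR r k l * q.yW (I.wOf r) k
      + ∑ k ∈ Icc (lb + 1) l \ Sb', q.x2 r k
      + ∑ k ∈ Sb', I.dcR r k l * q.yR r k ≥ I.dcR r 1 l)

/-- The per-retailer three-level inequalities for 3LF. -/
def TLFThree (I : LSData) (q : TLFPoint I) : Prop :=
  ∀ r, ∀ l ∈ Icc 3 I.NT, ∀ l0 l1, 1 ≤ l0 → l0 + 2 ≤ l → l0 < l1 → l1 + 1 ≤ l →
    ∀ S0 ⊆ Icc 1 l0, ∀ S1 ⊆ Icc (l0 + 1) l1, ∀ S2 ⊆ Icc (l1 + 1) l,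
    ∑ k ∈ Icc 1 l0 \ S0, q.x0 r k + ∑ k ∈ S0, I.dcR r k l * q.yP k
      + ∑ k ∈ Icc (l0 + 1) l1 \ S1, q.x1 r k
      + ∑ k ∈ S1, I.dcR r k l * q.yW (I.wOf r) k
      + ∑ k ∈ Icc (l1 + 1) l \ S2, q.x2 r k + ∑ k ∈ S2, I.dcR r k l * q.yR r k
      ≥ I.dcR r 1 l

/-- Objective function of the extended formulation 3LF. -/
def TLFObj (I : LSData) (q : TLFPoint I) : ℝ :=
  ∑ t ∈ Icc 1 I.NT,
    (I.scP t * q.yP t + (∑ w, I.scW w t * q.yW w t) + (∑ r, I.scR r t * q.yR r t)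
      + (∑ r, I.hcP t * q.s0 r t) + (∑ r, I.hcW (I.wOf r) t * q.s1 r t)
      + (∑ r, I.hcR r t * q.s2 r t))

/-!
Summing the per-retailer flows and stocks of a 3LF+ point over the retailers served by each
facility yields an STD point with the same objective. Cumulative facility demands are sums of
retailer demands, so every STD+ inequality is the sum over all retailers `r` of a per-retailer
3LF+ inequality, taken with the window sets of the warehouse `b(r)` serving `r`. Hence the
set of STD+ objective values contains that of 3LF+, and the infima compare.
-/

/-- The contribution of one level to an `(l, S)`-inequality; `D k` is the cumulative demand
of periods `k..l`. -/
def lsTerm (L S : Finset ℕ) (x D y : ℕ → ℝ) : ℝ :=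
  ∑ k ∈ L \ S, x k + ∑ k ∈ S, D k * y k

theorem sum_lsTerm {ι : Type*} (s : Finset ι) (L S : Finset ℕ) (x D : ι → ℕ → ℝ)
    (y : ℕ → ℝ) :
    ∑ i ∈ s, lsTerm L S (x i) (D i) y
      = lsTerm L S (fun k => ∑ i ∈ s, x i k) (fun k => ∑ i ∈ s, D i k) y := by
  simp only [lsTerm, sum_add_distrib, sum_mul]
  rw [sum_comm, sum_comm (s := s)]

namespace LSData

variable (I : LSData)

theorem wOf_eq_of_mem_ret {w : I.W} {r : I.R} (hr : r ∈ I.ret w) : I.wOf r = w :=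
  (mem_filter.mp hr).2

theorem sum_sum_ret (f : I.W → I.R → ℝ) :
    ∑ w, ∑ r ∈ I.ret w, f w r = ∑ r, f (I.wOf r) r := by
  rw [← sum_fiberwise univ I.wOf fun r => f (I.wOf r) r]
  exact sum_congr rfl fun w _ => sum_congr rfl fun r hr => by rw [I.wOf_eq_of_mem_ret hr]

end LSData

namespace TLFPoint

variable {I : LSData} (q : TLFPoint I)

def aggregate : STDPoint I where
  xP t := ∑ r, q.x0 r t
  sP t := ∑ r, q.s0 r t
  yP := q.yP
  xW w t := ∑ r ∈ I.ret w, q.x1 r t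
  sW w t := ∑ r ∈ I.ret w, q.s1 r t
  yW := q.yW
  xR := q.x2
  sR := q.s2
  yR := q.yR

theorem lsTerm_aggregate_xP (L S : Finset ℕ) (l : ℕ) :
    lsTerm L S q.aggregate.xP (I.dcP · l) q.yP
      = ∑ r, lsTerm L S (q.x0 r) (I.dcR r · l) q.yP :=
  (sum_lsTerm _ _ _ _ _ _).symm

theorem lsTerm_aggregate_xW (L S : Finset ℕ) (l : ℕ) (w : I.W) :
    lsTerm L S (q.aggregate.xW w) (I.dcW w · l) (q.yW w)
      = ∑ r ∈ I.ret w, lsTerm L S (q.x1 r) (I.dcR r · l) (q.yW (I.wOf r)) := by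
  rw [sum_congr rfl fun r hr => by rw [I.wOf_eq_of_mem_ret hr]]
  exact (sum_lsTerm _ _ _ _ _ _).symm

theorem sum_lsTerm_aggregate_xW (L : Finset ℕ) (S : I.W → Finset ℕ) (l : ℕ) :
    ∑ w, lsTerm L (S w) (q.aggregate.xW w) (I.dcW w · l) (q.yW w)
      = ∑ r, lsTerm L (S (I.wOf r)) (q.x1 r) (I.dcR r · l) (q.yW (I.wOf r)) := by
  simp only [lsTerm_aggregate_xW]
  exact I.sum_sum_ret fun w r => lsTerm L (S w) (q.x1 r) (I.dcR r · l) (q.yW (I.wOf r))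

variable {q}

theorem stdFeasLP_aggregate (hq : TLFFeasLP I q) : STDFeasLP I q.aggregate := by
  obtain ⟨hs0, hbal0, hbal1, hbal2, hx0, hx1, hx2, hnn, hyP, hyW, hyR⟩ := hq
  refine ⟨sum_eq_zero fun r _ => (hs0 r).1, fun w => sum_eq_zero fun r _ => (hs0 r).2.1,
    fun r => (hs0 r).2.2, fun t ht => ?_, fun w t ht => ?_, hbal2, fun t ht => ?_,
    fun w t ht => ?_, hx2, fun t ht => ?_, fun w t ht => ?_, fun r t ht => ?_⟩
  · change ∑ r, q.s0 r (t - 1) + ∑ r, q.x0 r t = ∑ w, ∑ r ∈ I.ret w, q.x1 r t + ∑ r, q.s0 r t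
    rw [I.sum_sum_ret fun _ r => q.x1 r t, ← sum_add_distrib, ← sum_add_distrib]
    exact sum_congr rfl fun r _ => hbal0 r t ht
  · simp only [aggregate, ← sum_add_distrib]
    exact sum_congr rfl fun r _ => hbal1 r t ht
  · rw [LSData.dcP, sum_mul]
    exact sum_le_sum fun r _ => hx0 r t ht
  · rw [LSData.dcW, sum_mul]
    exact sum_le_sum fun r hr => I.wOf_eq_of_mem_ret hr ▸ hx1 r t ht
  · exact ⟨sum_nonneg fun r _ => (hnn r t ht).1, sum_nonneg fun r _ => (hnn r t ht).2.2.2.1,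
      hyP t ht⟩
  · exact ⟨sum_nonneg fun r _ => (hnn r t ht).2.1,
      sum_nonneg fun r _ => (hnn r t ht).2.2.2.2.1, hyW w t ht⟩
  · exact ⟨(hnn r t ht).2.2.1, (hnn r t ht).2.2.2.2.2, hyR r t ht⟩

theorem stdObj_aggregate : STDObj I q.aggregate = TLFObj I q := by
  refine sum_congr rfl fun t _ => ?_
  have hP : I.hcP t * ∑ r, q.s0 r t = ∑ r, I.hcP t * q.s0 r t := mul_sum _ _ _
  have hW : ∑ w, I.hcW w t * ∑ r ∈ I.ret w, q.s1 r t = ∑ r, I.hcW (I.wOf r) t * q.s1 r t := by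
    simp only [mul_sum]
    exact I.sum_sum_ret fun w r => I.hcW w t * q.s1 r t
  simp only [aggregate, hP, hW]

theorem stdSingle_aggregate (h : TLFSingle I q) : STDSingle I q.aggregate := by
  refine ⟨fun l hl S hS => ?_, fun w l hl S hS => ?_, fun r l hl S hS => (h r l hl S hS).2.2⟩
  · change I.dcP 1 l ≤ lsTerm (Icc 1 l) S q.aggregate.xP (I.dcP · l) q.yP
    rw [q.lsTerm_aggregate_xP]
    exact sum_le_sum fun r _ => (h r l hl S hS).1
  · change I.dcW w 1 l ≤ lsTerm (Icc 1 l) S (q.aggregate.xW w) (I.dcW w · l) (q.yW w)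
    rw [q.lsTerm_aggregate_xW]
    exact sum_le_sum fun r _ => (h r l hl S hS).2.1

theorem stdTwo_aggregate (h : TLFTwo I q) : STDTwo I q.aggregate := by
  refine ⟨fun l hl li hli hlil Sp hSp Sw hSw => ?_, fun l hl li hli hlil Sp hSp Sr hSr => ?_,
    fun w l hl li hli hlil Sw hSw Sr hSr => ?_⟩
  · change I.dcP 1 l ≤ lsTerm (Icc 1 li) Sp q.aggregate.xP (I.dcP · l) q.yP
      + ∑ w, lsTerm (Icc (li + 1) l) (Sw w) (q.aggregate.xW w) (I.dcW w · l) (q.yW w)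
    rw [q.lsTerm_aggregate_xP, q.sum_lsTerm_aggregate_xW, ← sum_add_distrib]
    refine sum_le_sum fun r _ => ?_
    simpa only [lsTerm, ← add_assoc] using (h r l hl li hli hlil Sp hSp _ (hSw (I.wOf r))).1
  · change I.dcP 1 l ≤ lsTerm (Icc 1 li) Sp q.aggregate.xP (I.dcP · l) q.yP
      + ∑ r, lsTerm (Icc (li + 1) l) (Sr r) (q.x2 r) (I.dcR r · l) (q.yR r)
    rw [q.lsTerm_aggregate_xP, ← sum_add_distrib]
    refine sum_le_sum fun r _ => ?_
    simpa only [lsTerm, ← add_assoc] using (h r l hl li hli hlil Sp hSp _ (hSr r)).2.1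
  · change I.dcW w 1 l ≤ lsTerm (Icc 1 li) Sw (q.aggregate.xW w) (I.dcW w · l) (q.yW w)
      + ∑ r ∈ I.ret w, lsTerm (Icc (li + 1) l) (Sr r) (q.x2 r) (I.dcR r · l) (q.yR r)
    rw [q.lsTerm_aggregate_xW, ← sum_add_distrib]
    refine sum_le_sum fun r _ => ?_
    simpa only [lsTerm, ← add_assoc] using (h r l hl li hli hlil Sw hSw _ (hSr r)).2.2

theorem stdThree_aggregate (h : TLFThree I q) : STDThree I q.aggregate := by
  intro l hl lp lw hlp hlpl hlplw hlwl Sp hSp Sw hSw Sr hSr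
  change I.dcP 1 l ≤ lsTerm (Icc 1 lp) Sp q.aggregate.xP (I.dcP · l) q.yP
    + ∑ w, lsTerm (Icc (lp + 1) lw) (Sw w) (q.aggregate.xW w) (I.dcW w · l) (q.yW w)
    + ∑ r, lsTerm (Icc (lw + 1) l) (Sr r) (q.x2 r) (I.dcR r · l) (q.yR r)
  rw [q.lsTerm_aggregate_xP, q.sum_lsTerm_aggregate_xW, ← sum_add_distrib, ← sum_add_distrib]
  refine sum_le_sum fun r _ => ?_
  simpa only [lsTerm, ← add_assoc] using
    h r l hl lp lw hlp hlpl hlplw hlwl Sp hSp _ (hSw (I.wOf r)) _ (hSr r)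

end TLFPoint

/-- `z_{STD+} ≤ z_{3LF+}`: the optimal value of the LP relaxation of the standard
formulation strengthened with the single-, two- and three-level valid inequalities
is at most that of the extended formulation strengthened with its corresponding
inequalities. -/
theorem zSTDplus_le_z3LFplus (I : LSData)
    (hT : {v : ℝ | ∃ q : TLFPoint I,
        TLFFeasLP I q ∧ TLFSingle I q ∧ TLFTwo I q ∧ TLFThree I q ∧ v = TLFObj I q}.Nonempty)
    (hS : BddBelow {v : ℝ | ∃ p : STDPoint I,
        STDFeasLP I p ∧ STDSingle I p ∧ STDTwo I p ∧ STDThree I p ∧ v = STDObj I p}) :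
    sInf {v : ℝ | ∃ p : STDPoint I,
        STDFeasLP I p ∧ STDSingle I p ∧ STDTwo I p ∧ STDThree I p ∧ v = STDObj I p}
      ≤ sInf {v : ℝ | ∃ q : TLFPoint I,
        TLFFeasLP I q ∧ TLFSingle I q ∧ TLFTwo I q ∧ TLFThree I q ∧ v = TLFObj I q} := by
  refine csInf_le_csInf hS hT ?_
  rintro _ ⟨q, hF, h1, h2, h3, rfl⟩
  exact ⟨q.aggregate, TLFPoint.stdFeasLP_aggregate hF, TLFPoint.stdSingle_aggregate h1,
    TLFPoint.stdTwo_aggregate h2, TLFPoint.stdThree_aggregate h3, TLFPoint.stdObj_aggregate.symm⟩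
end

section
/- In the single-retailer chain with plant, one warehouse, and one retailer, for any feasible solution of the per-retailer extended formulation, any l ≥ 2, levels b < b', any l_b < l, and sets S^b ⊆ {1,...,l_b}, S^{b'} ⊆ {l_b+1,...,l}, the two-level inequality Σ_{k ∈ {1,...,l_b}\S^b} x^{b}_k + Σ_{k ∈ S^b} d_{k,l} y^{(b)}_k + Σ_{k ∈ {l_b+1,...,l}\S^{b'}} x^{b'}_k + Σ_{k ∈ S^{b'}} d_{k,l} y^{(b')}_k ≥ d_{1,l} holds, where d_{k,l} = Σ_{j=k}^l d_j is the cumulative retailer demand and y^{(b)} denotes the setup variable of the facility at level b on the chain. -/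
/-!
Summing a balance equation telescopes: the cumulative flow through a level equals the cumulative
flow leaving it plus its stock, so the cumulative flows `X^c(t) = ∑_{k ≤ t} x^c_k` decrease down
the chain and all dominate the cumulative demand `d_{1,t}`. Splicing `x^b` on `[1, lb]` with `x^{b'}` on `[lb + 1, l]` therefore
gives a single flow whose cumulative sums still dominate demand (because `X^{b'}(lb) ≤ X^b(lb)`),
and the two-level inequality is the classical `(l, S)` inequality for this flow with
`S = S^b ∪ S^{b'}`. That one holds because, if `t` is the first period of `S` with positive flow,
the flow outside `S` before `t` covers `d_{1,t-1}` while the setup term at `t` covers `d_{t,l}`.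
-/

open Finset

lemma sum_Icc_one_add_sum_Icc_add_one {M : Type*} [AddCommMonoid M] (f : ℕ → M) {m t : ℕ}
    (h : m ≤ t) : ∑ k ∈ Icc 1 m, f k + ∑ k ∈ Icc (m + 1) t, f k = ∑ k ∈ Icc 1 t, f k := by
  simpa only [← Icc_add_one_left_eq_Ioc, zero_add] using sum_Ioc_consecutive f m.zero_le h

lemma sum_union_ite_le {M : Type*} [AddCommMonoid M] (f g : ℕ → M) {n : ℕ} {A B : Finset ℕ}
    (hA : ∀ k ∈ A, k ≤ n) (hB : ∀ k ∈ B, n < k) :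
    ∑ k ∈ A ∪ B, (if k ≤ n then f k else g k) = ∑ k ∈ A, f k + ∑ k ∈ B, g k := by
  rw [sum_union (disjoint_left.mpr fun k hkA hkB => (hA k hkA).not_gt (hB k hkB))]
  congr 1
  · exact sum_congr rfl fun k hk => if_pos (hA k hk)
  · exact sum_congr rfl fun k hk => if_neg (hB k hk).not_ge

section Balance

variable {N : ℕ} {f g st : ℕ → ℝ}

lemma sum_Icc_one_eq_add_of_balance (h0 : st 0 = 0)
    (hbal : ∀ t ∈ Icc 1 N, st (t - 1) + f t = g t + st t) :
    ∀ t ≤ N, ∑ k ∈ Icc 1 t, f k = ∑ k ∈ Icc 1 t, g k + st t := by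
  intro t
  induction t with
  | zero => simp [h0]
  | succ n ih =>
    intro hn
    have h := hbal (n + 1) (mem_Icc.mpr ⟨n.succ_pos, hn⟩)
    rw [Nat.add_sub_cancel] at h
    rw [sum_Icc_succ_top (by omega), sum_Icc_succ_top (by omega), ih (by omega)]
    linarith

lemma sum_Icc_one_le_of_balance (h0 : st 0 = 0) (hst : ∀ t ∈ Icc 1 N, 0 ≤ st t)
    (hbal : ∀ t ∈ Icc 1 N, st (t - 1) + f t = g t + st t) {t : ℕ} (ht : t ≤ N) :
    ∑ k ∈ Icc 1 t, g k ≤ ∑ k ∈ Icc 1 t, f k := by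
  rcases t.eq_zero_or_pos with rfl | ht0
  · simp
  · rw [sum_Icc_one_eq_add_of_balance h0 hbal t ht]
    linarith [hst t (mem_Icc.mpr ⟨ht0, ht⟩)]

end Balance

lemma chain_cumulative_flow {N : ℕ} {d : ℕ → ℝ} {x s : Fin 3 → ℕ → ℝ}
    (hs0 : ∀ c, s c 0 = 0) (hs : ∀ c, ∀ t ∈ Icc 1 N, 0 ≤ s c t)
    (hbal0 : ∀ t ∈ Icc 1 N, s 0 (t - 1) + x 0 t = x 1 t + s 0 t)
    (hbal1 : ∀ t ∈ Icc 1 N, s 1 (t - 1) + x 1 t = x 2 t + s 1 t)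
    (hbal2 : ∀ t ∈ Icc 1 N, s 2 (t - 1) + x 2 t = d t + s 2 t) {t : ℕ} (ht : t ≤ N) :
    ∑ k ∈ Icc 1 t, d k ≤ ∑ k ∈ Icc 1 t, x 2 k ∧
      Antitone fun c => ∑ k ∈ Icc 1 t, x c k := by
  refine ⟨sum_Icc_one_le_of_balance (hs0 2) (hs 2) hbal2 ht, ?_⟩
  rw [Fin.antitone_iff_succ_le]
  intro c
  fin_cases c
  exacts [sum_Icc_one_le_of_balance (hs0 0) (hs 0) hbal0 ht,
    sum_Icc_one_le_of_balance (hs0 1) (hs 1) hbal1 ht]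

/-- The `(l, S)` inequality of Barány, Van Roy and Wolsey, with `w k` in the role of
`d_{k,l} y_k`. -/
lemma lS_inequality {d u w : ℕ → ℝ} {l : ℕ} {S : Finset ℕ} (hS : S ⊆ Icc 1 l)
    (hu : ∀ k ∈ Icc 1 l, 0 ≤ u k) (hw : ∀ k ∈ S, 0 ≤ w k ∧ (u k = 0 ∨ ∑ j ∈ Icc k l, d j ≤ w k))
    (hcum : ∀ t ≤ l, ∑ j ∈ Icc 1 t, d j ≤ ∑ k ∈ Icc 1 t, u k) :
    ∑ j ∈ Icc 1 l, d j ≤ ∑ k ∈ Icc 1 l \ S, u k + ∑ k ∈ S, w k := by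
  -- `m + 1` is the first period of `S` with positive flow, and `m = l` if there is none.
  obtain ⟨m, hml, hclosed, hopen⟩ : ∃ m ≤ l, (∀ k ∈ S, k ≤ m → u k = 0) ∧
      ∑ j ∈ Icc (m + 1) l, d j ≤ ∑ k ∈ S, w k := by
    set T := S.filter (u · ≠ 0)
    by_cases hne : T.Nonempty
    · obtain ⟨htS, hut⟩ := mem_filter.mp (T.min'_mem hne)
      have ht1 := mem_Icc.mp (hS htS)
      refine ⟨T.min' hne - 1, by omega, fun k hk hkt => ?_, ?_⟩
      · by_contra huk
        have := T.min'_le k (mem_filter.mpr ⟨hk, huk⟩)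
        omega
      · rw [Nat.sub_add_cancel ht1.1]
        exact ((hw _ htS).2.resolve_left hut).trans (single_le_sum (fun k hk => (hw k hk).1) htS)
    · refine ⟨l, le_rfl, fun k hk _ => ?_, by simpa using sum_nonneg fun k hk => (hw k hk).1⟩
      by_contra huk
      exact hne ⟨k, mem_filter.mpr ⟨hk, huk⟩⟩
  have hclosed_part : ∑ k ∈ Icc 1 m, u k ≤ ∑ k ∈ Icc 1 l \ S, u k :=
    calc ∑ k ∈ Icc 1 m, u k = ∑ k ∈ Icc 1 m \ S, u k :=
          (sum_subset sdiff_subset fun k hk hkS =>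
            hclosed k (by simpa [hk] using hkS) (mem_Icc.mp hk).2).symm
      _ ≤ ∑ k ∈ Icc 1 l \ S, u k :=
          sum_le_sum_of_subset_of_nonneg (sdiff_subset_sdiff (Icc_subset_Icc_right hml) le_rfl)
            fun k hk _ => hu k (mem_sdiff.mp hk).1
  calc ∑ j ∈ Icc 1 l, d j = ∑ j ∈ Icc 1 m, d j + ∑ j ∈ Icc (m + 1) l, d j :=
        (sum_Icc_one_add_sum_Icc_add_one d hml).symm
    _ ≤ ∑ k ∈ Icc 1 m, u k + ∑ k ∈ S, w k := add_le_add (hcum m hml) hopen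
    _ ≤ ∑ k ∈ Icc 1 l \ S, u k + ∑ k ∈ S, w k := add_le_add_left hclosed_part _

lemma le_sum_Icc_one_ite {a f g : ℕ → ℝ} {n N : ℕ}
    (hgf : ∑ k ∈ Icc 1 n, g k ≤ ∑ k ∈ Icc 1 n, f k)
    (hf : ∀ t ≤ n, a t ≤ ∑ k ∈ Icc 1 t, f k) (hg : ∀ t ≤ N, a t ≤ ∑ k ∈ Icc 1 t, g k)
    {t : ℕ} (ht : t ≤ N) : a t ≤ ∑ k ∈ Icc 1 t, (if k ≤ n then f k else g k) := by
  by_cases htn : t ≤ n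
  · rw [sum_congr rfl fun k hk => if_pos ((mem_Icc.mp hk).2.trans htn)]
    exact hf t htn
  · have hunion : Icc 1 n ∪ Icc (n + 1) t = Icc 1 t := by
      ext k
      simp only [mem_union, mem_Icc]
      omega
    rw [← hunion, sum_union_ite_le f g (fun k hk => (mem_Icc.mp hk).2)
      fun k hk => (mem_Icc.mp hk).1]
    calc a t ≤ ∑ k ∈ Icc 1 t, g k := hg t ht
      _ = ∑ k ∈ Icc 1 n, g k + ∑ k ∈ Icc (n + 1) t, g k :=
        (sum_Icc_one_add_sum_Icc_add_one g (by omega)).symm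
      _ ≤ ∑ k ∈ Icc 1 n, f k + ∑ k ∈ Icc (n + 1) t, g k := add_le_add_left hgf _

lemma two_level_lS_inequality {d f g p q : ℕ → ℝ} {lb l : ℕ} {Sb Sb' : Finset ℕ} (hlb : lb ≤ l)
    (hSb : Sb ⊆ Icc 1 lb) (hSb' : Sb' ⊆ Icc (lb + 1) l)
    (hf : ∀ k ∈ Icc 1 l, 0 ≤ f k) (hg : ∀ k ∈ Icc 1 l, 0 ≤ g k)
    (hp : ∀ k ∈ Sb, 0 ≤ p k ∧ (f k = 0 ∨ ∑ j ∈ Icc k l, d j ≤ p k))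
    (hq : ∀ k ∈ Sb', 0 ≤ q k ∧ (g k = 0 ∨ ∑ j ∈ Icc k l, d j ≤ q k))
    (hgf : ∑ k ∈ Icc 1 lb, g k ≤ ∑ k ∈ Icc 1 lb, f k)
    (hdf : ∀ t ≤ lb, ∑ j ∈ Icc 1 t, d j ≤ ∑ k ∈ Icc 1 t, f k)
    (hdg : ∀ t ≤ l, ∑ j ∈ Icc 1 t, d j ≤ ∑ k ∈ Icc 1 t, g k) :
    ∑ j ∈ Icc 1 l, d j ≤ ∑ k ∈ Icc 1 lb \ Sb, f k + ∑ k ∈ Sb, p k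
      + ∑ k ∈ Icc (lb + 1) l \ Sb', g k + ∑ k ∈ Sb', q k := by
  have hS : Sb ∪ Sb' ⊆ Icc 1 l :=
    union_subset (hSb.trans (Icc_subset_Icc_right hlb)) (hSb'.trans (Icc_subset_Icc_left (by omega)))
  have key := lS_inequality (u := fun k => if k ≤ lb then f k else g k)
    (w := fun k => if k ≤ lb then p k else q k) hS
    (fun k hk => by split_ifs; exacts [hf k hk, hg k hk])
    (fun k hk => by
      rcases mem_union.mp hk with hk | hk
      · simpa only [if_pos (mem_Icc.mp (hSb hk)).2] using hp k hk
      · simpa only [if_neg (Nat.lt_of_succ_le (mem_Icc.mp (hSb' hk)).1).not_ge] using hq k hk)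
    fun t ht => le_sum_Icc_one_ite hgf hdf hdg ht
  have hsdiff : Icc 1 l \ (Sb ∪ Sb') = (Icc 1 lb \ Sb) ∪ (Icc (lb + 1) l \ Sb') := by
    ext k
    have hkb := @hSb k
    have hkb' := @hSb' k
    simp only [mem_sdiff, mem_union, mem_Icc] at hkb hkb' ⊢
    grind
  rw [hsdiff, sum_union_ite_le _ _ (fun k hk => (mem_Icc.mp (mem_sdiff.mp hk).1).2)
      fun k hk => (mem_Icc.mp (mem_sdiff.mp hk).1).1,
    sum_union_ite_le _ _ (fun k hk => (mem_Icc.mp (hSb hk)).2)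
      fun k hk => (mem_Icc.mp (hSb' hk)).1] at key
  linarith

lemma mul_nonneg_and_eq_zero_or_le_mul {x y D D' : ℝ} (hx : 0 ≤ x) (hxy : x ≤ D' * y)
    (hy : y = 0 ∨ y = 1) (hD : 0 ≤ D) : 0 ≤ D * y ∧ (x = 0 ∨ D ≤ D * y) := by
  rcases hy with rfl | rfl
  · exact ⟨by simp, Or.inl (le_antisymm (by simpa using hxy) hx)⟩
  · simpa using hD

theorem chain_two_level_inequality_general
    (NT : ℕ) (d : ℕ → ℝ) (x s y : Fin 3 → ℕ → ℝ)
    (hd : ∀ t ∈ Icc 1 NT, 0 ≤ d t)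
    (hs0 : ∀ b, s b 0 = 0)
    (hbal0 : ∀ t ∈ Icc 1 NT, s 0 (t - 1) + x 0 t = x 1 t + s 0 t)
    (hbal1 : ∀ t ∈ Icc 1 NT, s 1 (t - 1) + x 1 t = x 2 t + s 1 t)
    (hbal2 : ∀ t ∈ Icc 1 NT, s 2 (t - 1) + x 2 t = d t + s 2 t)
    (hset : ∀ b, ∀ t ∈ Icc 1 NT, x b t ≤ (∑ j ∈ Icc t NT, d j) * y b t)
    (hy : ∀ b, ∀ t ∈ Icc 1 NT, y b t = 0 ∨ y b t = 1)
    (hnn : ∀ b, ∀ t ∈ Icc 1 NT, 0 ≤ x b t ∧ 0 ≤ s b t)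
    (b b' : Fin 3) (hbb : b < b')
    (l : ℕ) (hlNT : l ≤ NT)
    (lb : ℕ) (hlb : lb < l)
    (Sb Sb' : Finset ℕ) (hSb : Sb ⊆ Icc 1 lb) (hSb' : Sb' ⊆ Icc (lb + 1) l) :
    ∑ k ∈ Icc 1 lb \ Sb, x b k + ∑ k ∈ Sb, (∑ j ∈ Icc k l, d j) * y b k
      + ∑ k ∈ Icc (lb + 1) l \ Sb', x b' k
      + ∑ k ∈ Sb', (∑ j ∈ Icc k l, d j) * y b' k
      ≥ ∑ j ∈ Icc 1 l, d j := by
  have hIcc : Icc 1 l ⊆ Icc 1 NT := Icc_subset_Icc_right hlNT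
  have hflow := fun t (ht : t ≤ NT) =>
    chain_cumulative_flow hs0 (fun c t ht => (hnn c t ht).2) hbal0 hbal1 hbal2 ht
  have hdemand : ∀ c, ∀ t ≤ l, ∑ j ∈ Icc 1 t, d j ≤ ∑ k ∈ Icc 1 t, x c k := fun c t ht =>
    (hflow t (ht.trans hlNT)).1.trans ((hflow t (ht.trans hlNT)).2 (Fin.le_last c))
  have hsetup : ∀ c, ∀ k ∈ Icc 1 l, 0 ≤ (∑ j ∈ Icc k l, d j) * y c k ∧
      (x c k = 0 ∨ ∑ j ∈ Icc k l, d j ≤ (∑ j ∈ Icc k l, d j) * y c k) := fun c k hk =>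
    mul_nonneg_and_eq_zero_or_le_mul (hnn c k (hIcc hk)).1 (hset c k (hIcc hk)) (hy c k (hIcc hk))
      (sum_nonneg fun j hj => hd j (hIcc (Icc_subset_Icc_left (mem_Icc.mp hk).1 hj)))
  exact two_level_lS_inequality hlb.le hSb hSb' (fun k hk => (hnn b k (hIcc hk)).1)
    (fun k hk => (hnn b' k (hIcc hk)).1)
    (fun k hk => hsetup b k (Icc_subset_Icc_right hlb.le (hSb hk)))
    (fun k hk => hsetup b' k (Icc_subset_Icc_left (by omega) (hSb' hk)))
    ((hflow lb (by omega)).2 hbb.le) (fun t ht => hdemand b t (by omega)) (hdemand b')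

/-- Two-level valid inequality for the single-retailer three-level serial chain. -/
theorem chain_two_level_inequality
    (NT : ℕ) (d : ℕ → ℝ) (x s y : Fin 3 → ℕ → ℝ)
    (hd : ∀ t ∈ Icc 1 NT, 0 ≤ d t)
    (hs0 : ∀ b, s b 0 = 0)
    (hbal0 : ∀ t ∈ Icc 1 NT, s 0 (t - 1) + x 0 t = x 1 t + s 0 t)
    (hbal1 : ∀ t ∈ Icc 1 NT, s 1 (t - 1) + x 1 t = x 2 t + s 1 t)
    (hbal2 : ∀ t ∈ Icc 1 NT, s 2 (t - 1) + x 2 t = d t + s 2 t)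
    (hset : ∀ b, ∀ t ∈ Icc 1 NT, x b t ≤ (∑ j ∈ Icc t NT, d j) * y b t)
    (hy : ∀ b, ∀ t ∈ Icc 1 NT, y b t = 0 ∨ y b t = 1)
    (hnn : ∀ b, ∀ t ∈ Icc 1 NT, 0 ≤ x b t ∧ 0 ≤ s b t)
    (b b' : Fin 3) (hbb : b < b')
    (l : ℕ) (hl2 : 2 ≤ l) (hlNT : l ≤ NT)
    (lb : ℕ) (hlb : lb < l)
    (Sb Sb' : Finset ℕ) (hSb : Sb ⊆ Icc 1 lb) (hSb' : Sb' ⊆ Icc (lb + 1) l) :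
    ∑ k ∈ Icc 1 lb \ Sb, x b k + ∑ k ∈ Sb, (∑ j ∈ Icc k l, d j) * y b k
      + ∑ k ∈ Icc (lb + 1) l \ Sb', x b' k
      + ∑ k ∈ Sb', (∑ j ∈ Icc k l, d j) * y b' k
      ≥ ∑ j ∈ Icc 1 l, d j :=
  chain_two_level_inequality_general NT d x s y hd hs0 hbal0 hbal1 hbal2 hset hy hnn b b' hbb l hlNT
    lb hlb Sb Sb' hSb hSb'
end

section
/- In the multi-commodity formulation of the three-level lot-sizing problem, suppose for retailer r and periods k < t the inequality d^r_t · Σ_{l=k}^{t-1} hc^r_l ≥ d^r_t · Σ_{l=k}^{t-1} hc^{δ_w(r)}_l + sc^r_t holds (storing demand d^r_t at the retailer from period k to t costs at least as much as storing it at the warehouse plus one retailer setup at t). Then for any feasible solution with w^{2r}_{k,t} = d^r_t, there exists another feasible solution of cost no greater in which w^{2r}_{k,t} = 0; consequently, fixing w^{2r}_{k,t} = 0 preserves the existence of an optimal solution. -/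
open Finset

/-- A point in the variable space of the multi-commodity formulation MC:
`w0 r k t`, `w1 r k t`, `w2 r k t` are the flows at levels 0, 1, 2 in period `k`
serving the demand `d r t`, and `sg0, sg1, sg2` the corresponding stocks. -/
structure MCPoint (I : LSData) where
  w0 : I.R → ℕ → ℕ → ℝ
  w1 : I.R → ℕ → ℕ → ℝ
  w2 : I.R → ℕ → ℕ → ℝ
  sg0 : I.R → ℕ → ℕ → ℝ
  sg1 : I.R → ℕ → ℕ → ℝ
  sg2 : I.R → ℕ → ℕ → ℝ
  yP : ℕ → ℝ
  yW : I.W → ℕ → ℝ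
  yR : I.R → ℕ → ℝ

/-- Feasibility for the multi-commodity formulation MC (binary setups). -/
def MCFeas (I : LSData) (p : MCPoint I) : Prop :=
  (∀ r, ∀ t ∈ Icc 1 I.NT, p.sg0 r 0 t = 0 ∧ p.sg1 r 0 t = 0 ∧ p.sg2 r 0 t = 0) ∧
  (∀ r, ∀ t ∈ Icc 1 I.NT, p.sg0 r t t = 0 ∧ p.sg1 r t t = 0 ∧ p.sg2 r t t = 0) ∧
  (∀ r, ∀ t ∈ Icc 1 I.NT, ∀ k ∈ Icc 1 t,
    p.sg0 r (k - 1) t + p.w0 r k t = p.w1 r k t + p.sg0 r k t) ∧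
  (∀ r, ∀ t ∈ Icc 1 I.NT, ∀ k ∈ Icc 1 t,
    p.sg1 r (k - 1) t + p.w1 r k t = p.w2 r k t + p.sg1 r k t) ∧
  (∀ r, ∀ t ∈ Icc 1 I.NT, ∀ k ∈ Icc 1 t,
    p.sg2 r (k - 1) t + p.w2 r k t = if k = t then I.d r t else p.sg2 r k t) ∧
  (∀ r, ∀ t ∈ Icc 1 I.NT, ∀ k ∈ Icc 1 t, p.w0 r k t ≤ I.d r t * p.yP k) ∧
  (∀ r, ∀ t ∈ Icc 1 I.NT, ∀ k ∈ Icc 1 t, p.w1 r k t ≤ I.d r t * p.yW (I.wOf r) k) ∧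
  (∀ r, ∀ t ∈ Icc 1 I.NT, ∀ k ∈ Icc 1 t, p.w2 r k t ≤ I.d r t * p.yR r k) ∧
  (∀ r, ∀ t ∈ Icc 1 I.NT, ∀ k ∈ Icc 1 t,
    0 ≤ p.w0 r k t ∧ 0 ≤ p.w1 r k t ∧ 0 ≤ p.w2 r k t ∧
    0 ≤ p.sg0 r k t ∧ 0 ≤ p.sg1 r k t ∧ 0 ≤ p.sg2 r k t) ∧
  (∀ t ∈ Icc 1 I.NT, p.yP t = 0 ∨ p.yP t = 1) ∧
  (∀ w, ∀ t ∈ Icc 1 I.NT, p.yW w t = 0 ∨ p.yW w t = 1) ∧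
  (∀ r, ∀ t ∈ Icc 1 I.NT, p.yR r t = 0 ∨ p.yR r t = 1)

/-- Total cost (setup plus holding) of a point of the MC formulation. -/
def MCCost (I : LSData) (p : MCPoint I) : ℝ :=
  (∑ t ∈ Icc 1 I.NT,
    (I.scP t * p.yP t + (∑ w, I.scW w t * p.yW w t) + (∑ r, I.scR r t * p.yR r t)))
  + ∑ r, ∑ t ∈ Icc 1 I.NT, ∑ k ∈ Icc 1 t,
      (I.hcP k * p.sg0 r k t + I.hcW (I.wOf r) k * p.sg1 r k t + I.hcR r k * p.sg2 r k t)

/-!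
Commodity `(r, t)` is consumed only in period `t`, so whatever reaches retailer `r` for it in
period `k < t` stays in the retailer's stock during periods `k, …, t - 1`. Shipping that amount
to the retailer in period `t` instead, keeping it at the warehouse meanwhile, and opening a
retailer setup in period `t` preserves every balance, setup and sign constraint. The cost changes
by `scR r t * (1 - yR r t) + w2 r k t * ∑_{l ∈ [k, t)} (hcW l - hcR l)`, which is nonpositive when
`w2 r k t = d r t` by the hypothesis on the costs.
-/

-- Shifting the window `[k, t)` one period forward trades period `k` for period `t`: this is
-- what keeps the stock balances of `postponeDelivery` intact.
lemma ite_sub_one_mem_Ico_add_ite_eq {M : Type*} [AddCommMonoid M] {j k t : ℕ} (hj : 1 ≤ j)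
    (hkt : k ≤ t) (δ : M) :
    ((if j - 1 ∈ Ico k t then δ else 0) + if j = k then δ else 0) =
      (if j ∈ Ico k t then δ else 0) + if j = t then δ else 0 := by
  simp only [mem_Ico]
  split_ifs <;> first | omega | simp

namespace MCPoint

variable {I : LSData}

open Classical in
/-- The modified solution of the paper: the amount `p.w2 r k t` of commodity `(r, t)` that
reaches the retailer in period `k` is shipped in period `t` instead and kept at the warehouse
meanwhile, and a retailer setup is opened in period `t`. -/
noncomputable def postponeDelivery (p : MCPoint I) (r : I.R) (k t : ℕ) : MCPoint I where
  w0 := p.w0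
  w1 := p.w1
  w2 r' j t' := if r' = r ∧ t' = t then
      p.w2 r j t + (if j = t then p.w2 r k t else 0) - (if j = k then p.w2 r k t else 0)
    else p.w2 r' j t'
  sg0 := p.sg0
  sg1 r' j t' := if r' = r ∧ t' = t then
      p.sg1 r j t + (if j ∈ Ico k t then p.w2 r k t else 0)
    else p.sg1 r' j t'
  sg2 r' j t' := if r' = r ∧ t' = t then
      p.sg2 r j t - (if j ∈ Ico k t then p.w2 r k t else 0)
    else p.sg2 r' j t'
  yP := p.yP
  yW := p.yW
  yR r' j := if r' = r ∧ j = t then 1 else p.yR r' j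

lemma MCCost_postponeDelivery (p : MCPoint I) (r : I.R) {k t : ℕ} (hk : 1 ≤ k)
    (ht : t ∈ Icc 1 I.NT) :
    MCCost I (p.postponeDelivery r k t) = MCCost I p + I.scR r t * (1 - p.yR r t) +
      (∑ j ∈ Ico k t, (I.hcW (I.wOf r) j - I.hcR r j)) * p.w2 r k t := by
  classical
  have hyR : ∀ r' j, (p.postponeDelivery r k t).yR r' j =
      p.yR r' j + if r' = r ∧ j = t then 1 - p.yR r t else 0 := by
    intro r' j
    simp only [postponeDelivery]
    split_ifs with h
    · obtain ⟨rfl, rfl⟩ := h; ring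
    · ring
  have hsg1 : ∀ r' j t', (p.postponeDelivery r k t).sg1 r' j t' =
      p.sg1 r' j t' + if r' = r ∧ t' = t then (if j ∈ Ico k t then p.w2 r k t else 0) else 0 := by
    intro r' j t'
    simp only [postponeDelivery]
    by_cases h : r' = r ∧ t' = t
    · obtain ⟨rfl, rfl⟩ := h; simp
    · simp [h]
  have hsg2 : ∀ r' j t', (p.postponeDelivery r k t).sg2 r' j t' =
      p.sg2 r' j t' - if r' = r ∧ t' = t then (if j ∈ Ico k t then p.w2 r k t else 0) else 0 := by
    intro r' j t'
    simp only [postponeDelivery]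
    by_cases h : r' = r ∧ t' = t
    · obtain ⟨rfl, rfl⟩ := h; simp
    · simp [h]
  have hwin : Icc 1 t ∩ Ico k t = Ico k t :=
    inter_eq_right.2 fun j hj => by simp only [mem_Icc, mem_Ico] at hj ⊢; omega
  simp only [MCCost, hyR, hsg1, hsg2, mul_add, mul_sub, sum_add_distrib, sum_sub_distrib,
    mul_ite, mul_zero, sum_ite_irrel, sum_const_zero, ite_and, sum_ite_eq', sum_ite_mem, hwin,
    if_pos ht, mem_univ, if_true]
  simp only [postponeDelivery, sum_mul, sub_mul]
  ring

end MCPoint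

namespace MCFeas

variable {I : LSData} {p : MCPoint I} {r : I.R} {t : ℕ}

lemma w2_nonneg (hp : MCFeas I p) (ht : t ∈ Icc 1 I.NT) {j : ℕ} (hj : j ∈ Icc 1 t) :
    0 ≤ p.w2 r j t := by
  obtain ⟨-, -, -, -, -, -, -, -, hnn, -⟩ := hp
  exact (hnn r t ht j hj).2.2.1

lemma sg2_nonneg (hp : MCFeas I p) (ht : t ∈ Icc 1 I.NT) {j : ℕ} (hjt : j ≤ t) :
    0 ≤ p.sg2 r j t := by
  obtain ⟨hinit, -, -, -, -, -, -, -, hnn, -⟩ := hp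
  rcases Nat.eq_zero_or_pos j with rfl | hj
  · exact (hinit r t ht).2.2.ge
  · exact (hnn r t ht j (mem_Icc.2 ⟨hj, hjt⟩)).2.2.2.2.2

lemma yR_nonneg (hp : MCFeas I p) (ht : t ∈ Icc 1 I.NT) : 0 ≤ p.yR r t := by
  obtain ⟨-, -, -, -, -, -, -, -, -, -, -, hbinR⟩ := hp
  rcases hbinR r t ht with h | h <;> simp [h]

lemma sg2_sub_one_add_w2 (hp : MCFeas I p) (ht : t ∈ Icc 1 I.NT) {j : ℕ} (hj : 1 ≤ j)
    (hjt : j < t) : p.sg2 r (j - 1) t + p.w2 r j t = p.sg2 r j t := by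
  obtain ⟨-, -, -, -, hbal2, -⟩ := hp
  simpa [hjt.ne] using hbal2 r t ht j (mem_Icc.2 ⟨hj, hjt.le⟩)

lemma w2_le_sg2 (hp : MCFeas I p) (ht : t ∈ Icc 1 I.NT) {k j : ℕ} (hk : 1 ≤ k) (hkj : k ≤ j)
    (hjt : j < t) : p.w2 r k t ≤ p.sg2 r j t := by
  induction j, hkj using Nat.le_induction with
  | base =>
    linarith [hp.sg2_sub_one_add_w2 (r := r) ht hk hjt,
      hp.sg2_nonneg (r := r) ht (j := k - 1) (by omega)]
  | succ j hkj ih =>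
    have hstep := hp.sg2_sub_one_add_w2 (r := r) ht (j := j + 1) (by omega) hjt
    rw [Nat.add_sub_cancel] at hstep
    linarith [ih (by omega), hp.w2_nonneg (r := r) ht (j := j + 1) (mem_Icc.2 ⟨by omega, hjt.le⟩)]

lemma w2_self_add_w2_le_demand (hp : MCFeas I p) (ht : t ∈ Icc 1 I.NT) {k : ℕ} (hk : 1 ≤ k)
    (hkt : k < t) : p.w2 r t t + p.w2 r k t ≤ I.d r t := by
  obtain ⟨-, -, -, -, hbal2, -⟩ := id hp
  have hlast := hbal2 r t ht t (mem_Icc.2 ⟨by omega, le_rfl⟩)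
  rw [if_pos rfl] at hlast
  linarith [hp.w2_le_sg2 (r := r) ht hk (j := t - 1) (by omega) (by omega)]

section postponeDelivery

variable {k : ℕ} (hp : MCFeas I p) (hkt : k < t)
include hp hkt

lemma postponeDelivery_sg1_balance :
    ∀ r', ∀ t' ∈ Icc 1 I.NT, ∀ j ∈ Icc 1 t',
      let q := p.postponeDelivery r k t
      q.sg1 r' (j - 1) t' + q.w1 r' j t' = q.w2 r' j t' + q.sg1 r' j t' := by
  obtain ⟨-, -, -, hbal1, -⟩ := hp
  intro r' t' ht' j hj
  by_cases hc : r' = r ∧ t' = t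
  · obtain ⟨rfl, rfl⟩ := hc
    simp only [MCPoint.postponeDelivery, and_self, if_true]
    linear_combination hbal1 r' t' ht' j hj +
      ite_sub_one_mem_Ico_add_ite_eq (mem_Icc.1 hj).1 hkt.le (p.w2 r' k t')
  · simpa only [MCPoint.postponeDelivery, hc, if_false] using hbal1 r' t' ht' j hj

lemma postponeDelivery_sg2_balance :
    ∀ r', ∀ t' ∈ Icc 1 I.NT, ∀ j ∈ Icc 1 t',
      let q := p.postponeDelivery r k t
      q.sg2 r' (j - 1) t' + q.w2 r' j t' = if j = t' then I.d r' t' else q.sg2 r' j t' := by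
  obtain ⟨-, -, -, -, hbal2, -⟩ := hp
  intro r' t' ht' j hj
  by_cases hc : r' = r ∧ t' = t
  · obtain ⟨rfl, rfl⟩ := hc
    simp only [MCPoint.postponeDelivery, and_self, if_true]
    have hrhs : (if j = t' then I.d r' t' else
          p.sg2 r' j t' - if j ∈ Ico k t' then p.w2 r' k t' else 0) =
        (if j = t' then I.d r' t' else p.sg2 r' j t') -
          if j ∈ Ico k t' then p.w2 r' k t' else 0 := by
      split_ifs <;> simp_all
    rw [hrhs]
    linear_combination hbal2 r' t' ht' j hj -
      ite_sub_one_mem_Ico_add_ite_eq (mem_Icc.1 hj).1 hkt.le (p.w2 r' k t')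
  · simpa only [MCPoint.postponeDelivery, hc, if_false] using hbal2 r' t' ht' j hj

lemma postponeDelivery_nonneg (hk : 1 ≤ k) :
    ∀ r', ∀ t' ∈ Icc 1 I.NT, ∀ j ∈ Icc 1 t',
      let q := p.postponeDelivery r k t
      0 ≤ q.w0 r' j t' ∧ 0 ≤ q.w1 r' j t' ∧ 0 ≤ q.w2 r' j t' ∧
        0 ≤ q.sg0 r' j t' ∧ 0 ≤ q.sg1 r' j t' ∧ 0 ≤ q.sg2 r' j t' := by
  obtain ⟨-, -, -, -, -, -, -, -, hnn, -⟩ := id hp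
  intro r' t' ht' j hj
  obtain ⟨n0, n1, n2, n3, n4, n5⟩ := hnn r' t' ht' j hj
  by_cases hc : r' = r ∧ t' = t
  · obtain ⟨rfl, rfl⟩ := hc
    have hδ : 0 ≤ p.w2 r' k t' := hp.w2_nonneg ht' (mem_Icc.2 ⟨hk, hkt.le⟩)
    simp only [MCPoint.postponeDelivery, and_self, if_true]
    refine ⟨n0, n1, ?_, n3, ?_, ?_⟩
    · by_cases hjk : j = k
      · simp [hjk, hkt.ne]
      · simp only [if_neg hjk, sub_zero]
        split_ifs <;> linarith
    · split_ifs <;> linarith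
    · split_ifs with hj'
      · linarith [hp.w2_le_sg2 (r := r') ht' hk (mem_Ico.1 hj').1 (mem_Ico.1 hj').2]
      · linarith
  · simpa only [MCPoint.postponeDelivery, hc, if_false] using hnn r' t' ht' j hj

lemma postponeDelivery_w2_le (hd : ∀ t', 0 ≤ I.d r t') (hk : 1 ≤ k) (ht : t ≤ I.NT) :
    ∀ r', ∀ t' ∈ Icc 1 I.NT, ∀ j ∈ Icc 1 t',
      let q := p.postponeDelivery r k t
      q.w2 r' j t' ≤ I.d r' t' * q.yR r' j := by
  obtain ⟨-, -, -, -, -, -, -, hsetR, -, -, -, hbinR⟩ := id hp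
  intro r' t' ht' j hj
  have hjI : j ∈ Icc 1 I.NT := by simp only [mem_Icc] at hj ht' ⊢; omega
  have hy : I.d r' t' * p.yR r' j ≤ I.d r' t' * (p.postponeDelivery r k t).yR r' j := by
    simp only [MCPoint.postponeDelivery]
    split_ifs with h
    · obtain ⟨rfl, -⟩ := h
      rcases hbinR r' j hjI with h | h <;> simp [h, hd]
    · rfl
  by_cases hc : r' = r ∧ t' = t
  · obtain ⟨rfl, rfl⟩ := hc
    by_cases hjt : j = t'
    · subst hjt
      simpa [MCPoint.postponeDelivery, hkt.ne'] using
        hp.w2_self_add_w2_le_demand (mem_Icc.2 ⟨by omega, ht⟩) hk hkt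
    refine le_trans ?_ hy
    by_cases hjk : j = k
    · subst hjk
      simpa [MCPoint.postponeDelivery, hjt] using mul_nonneg (hd t') (hp.yR_nonneg hjI)
    · simpa [MCPoint.postponeDelivery, hjt, hjk] using hsetR r' t' ht' j hj
  · exact le_trans (by simpa [MCPoint.postponeDelivery, hc] using hsetR r' t' ht' j hj) hy

end postponeDelivery

lemma postponeDelivery (hp : MCFeas I p) (hd : ∀ t', 0 ≤ I.d r t') {k : ℕ} (hk : 1 ≤ k)
    (hkt : k < t) (ht : t ≤ I.NT) : MCFeas I (p.postponeDelivery r k t) := by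
  obtain ⟨hinit, hfinal, hcons0, -, -, hsetP, hsetW, -, -, hbinP, hbinW, hbinR⟩ := id hp
  refine ⟨?_, ?_, hcons0, hp.postponeDelivery_sg1_balance hkt, hp.postponeDelivery_sg2_balance hkt,
    hsetP, hsetW, hp.postponeDelivery_w2_le hkt hd hk ht, hp.postponeDelivery_nonneg hkt hk,
    hbinP, hbinW, ?_⟩
  · intro r' t' ht'
    by_cases hc : r' = r ∧ t' = t
    · obtain ⟨rfl, rfl⟩ := hc
      have h0 : 0 ∉ Ico k t' := by simp only [mem_Ico]; omega
      simpa only [MCPoint.postponeDelivery, and_self, if_true, if_neg h0, add_zero, sub_zero]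
        using hinit r' t' ht'
    · simpa [MCPoint.postponeDelivery, hc] using hinit r' t' ht'
  · intro r' t' ht'
    by_cases hc : r' = r ∧ t' = t
    · obtain ⟨rfl, rfl⟩ := hc
      simpa [MCPoint.postponeDelivery] using hfinal r' t' ht'
    · simpa [MCPoint.postponeDelivery, hc] using hfinal r' t' ht'
  · intro r' j hj
    simp only [MCPoint.postponeDelivery]
    split_ifs
    · exact Or.inr rfl
    · exact hbinR r' j hj

end MCFeas

/-- Preprocessing for the multi-commodity formulation: if storing the demand `d r t`
at the retailer from period `k` up to `t` costs at least as much as storing it at the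
warehouse plus one retailer setup at `t`, then any feasible solution with
`w2 r k t = d r t` can be replaced by a feasible solution of no greater cost in which
`w2 r k t = 0`. -/
theorem mc_preprocessing (I : LSData) (r : I.R) (k t : ℕ)
    (hk1 : 1 ≤ k) (hkt : k < t) (ht : t ≤ I.NT)
    (hd : ∀ r' : I.R, ∀ t' : ℕ, 0 ≤ I.d r' t')
    (hsc : 0 ≤ I.scR r t)
    (hcost : I.d r t * (∑ l ∈ Icc k (t - 1), I.hcR r l)
      ≥ I.d r t * (∑ l ∈ Icc k (t - 1), I.hcW (I.wOf r) l) + I.scR r t)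
    (p : MCPoint I) (hfeas : MCFeas I p) (hw : p.w2 r k t = I.d r t) :
    ∃ q : MCPoint I, MCFeas I q ∧ q.w2 r k t = 0 ∧ MCCost I q ≤ MCCost I p := by
  have htI : t ∈ Icc 1 I.NT := mem_Icc.2 ⟨by omega, ht⟩
  refine ⟨p.postponeDelivery r k t, hfeas.postponeDelivery (hd r) hk1 hkt ht, ?_, ?_⟩
  · simp [MCPoint.postponeDelivery, hkt.ne]
  · have hy : 0 ≤ p.yR r t := hfeas.yR_nonneg htI
    rw [Icc_sub_one_right_eq_Ico_of_not_isMin (by simpa using (by omega : t ≠ 0))] at hcost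
    rw [p.MCCost_postponeDelivery r hk1 htI, hw, sum_sub_distrib, sub_mul]
    nlinarith [mul_nonneg hsc hy]
end

section
/- Consider a dicut collection Γ = {Γ^t}_{t ∈ 𝒯} for an uncapacitated fixed-charge network flow problem, where each Γ^t is a set of t-dicuts (arc sets whose removal disconnects source s from sink t). Let γ^t_{ij} be the number of t-dicuts in Γ^t containing arc (i,j), γ_{ij} = max_t γ^t_{ij}, and γ^t = |Γ^t|. Then every feasible solution satisfies Σ_{(i,j) ∈ F̄} γ_{ij} x_{ij} + Σ_{(i,j) ∈ F} Σ_{t ∈ 𝒯} d_t γ^t_{ij} y_{ij} ≥ Σ_{t ∈ 𝒯} γ^t d_t. -/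
open Finset

/-!
For a `t`-dicut `C`, the nodes reachable from `s` without using `C` form a set containing `s` but
not `t` whose leaving arcs all lie in `C`, so flow conservation forces the commodity-`t` flow on `C`
to be at least `d_t`. If some fixed-charge arc of `C` is open it pays `d_t` on its own; otherwise
every fixed-charge arc of `C` carries no flow and the continuous arcs of `C` carry `d_t`. Summing
over `C ∈ Γ^t` counts each arc `γ^t_a` times, and summing over `t` with `γ^t_a ≤ γ_a` and
`x = ∑_t f_t` gives the inequality.
-/

theorem List.IsChain.rel_of_mem_zip {α : Type*} {R : α → α → Prop} :
    ∀ {a : α} {l : List α}, IsChain R (a :: l) → ∀ e ∈ zip (a :: l) l, R e.1 e.2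
  | _, [], _, e, he => by simp at he
  | _, _ :: _, h, e, he => by
    rw [isChain_cons_cons] at h
    rw [zip_cons_cons, mem_cons] at he
    rcases he with rfl | he
    · exact h.1
    · exact h.2.rel_of_mem_zip e he

section Flow

variable {N M : Type*}

/-- A path from `s` is the vertex list `s :: p`; its arcs are `zip (s :: p) p`. -/
def IsDicut (A C : Finset (N × N)) (s t : N) : Prop :=
  ∀ p : List N, List.IsChain (fun u v => (u, v) ∈ A) (s :: p) →
    (s :: p).getLast (List.cons_ne_nil s p) = t → ∃ e ∈ List.zip (s :: p) p, e ∈ C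

theorem IsDicut.not_reflTransGen {A C : Finset (N × N)} {s t : N} (hC : IsDicut A C s t) :
    ¬ Relation.ReflTransGen (fun u v => (u, v) ∈ A ∧ (u, v) ∉ C) s t := by
  intro hst
  obtain ⟨p, hchain, hlast⟩ := List.exists_isChain_cons_of_relationReflTransGen hst
  obtain ⟨e, he, heC⟩ := hC p (hchain.imp fun _ _ => And.left) hlast
  exact (hchain.rel_of_mem_zip e he).2 heC

variable [DecidableEq N] [AddCommGroup M]

def netOutflow (A : Finset (N × N)) (g : N × N → M) (n : N) : M :=
  ∑ a ∈ A with a.1 = n, g a - ∑ a ∈ A with a.2 = n, g a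

def IsFlow (A : Finset (N × N)) (g : N × N → M) (s t : N) (d : M) : Prop :=
  ∀ n, netOutflow A g n = if n = s then d else if n = t then -d else 0

theorem sum_netOutflow (A : Finset (N × N)) (g : N × N → M) (S : Finset N) :
    ∑ n ∈ S, netOutflow A g n
      = ∑ a ∈ A, ((if a.1 ∈ S then g a else 0) - if a.2 ∈ S then g a else 0) := by
  rw [sum_sub_distrib, ← sum_filter, ← sum_filter, ← sum_fiberwise_eq_sum_filter A S Prod.fst,
    ← sum_fiberwise_eq_sum_filter A S Prod.snd, ← sum_sub_distrib]
  rfl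

theorem IsFlow.sum_netOutflow_eq {A : Finset (N × N)} {g : N × N → M} {s t : N} {d : M}
    (hg : IsFlow A g s t d) {S : Finset N} (hs : s ∈ S) (ht : t ∉ S) :
    ∑ n ∈ S, netOutflow A g n = d := by
  rw [sum_eq_single_of_mem s hs fun n hn hns => by
    rw [hg, if_neg hns, if_neg (ne_of_mem_of_not_mem hn ht)], hg, if_pos rfl]

variable [PartialOrder M] [IsOrderedAddMonoid M]

theorem sum_netOutflow_le_sum {A C : Finset (N × N)} {g : N × N → M} (hnn : ∀ a, 0 ≤ g a)
    {S : Finset N} (hleave : ∀ a ∈ A, a.1 ∈ S → a.2 ∉ S → a ∈ C) :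
    ∑ n ∈ S, netOutflow A g n ≤ ∑ a ∈ C, g a := by
  have hpoint : ∀ a ∈ A, ((if a.1 ∈ S then g a else 0) - if a.2 ∈ S then g a else 0)
      ≤ if a ∈ C then g a else 0 := by
    intro a ha
    have hite : 0 ≤ if a ∈ C then g a else 0 := by split_ifs <;> simp [hnn]
    by_cases h1 : a.1 ∈ S <;> by_cases h2 : a.2 ∈ S <;>
      simp only [h1, h2, if_true, if_false, sub_self, sub_zero, zero_sub, hite]
    · rw [if_pos (hleave a ha h1 h2)]
    · exact (neg_nonpos.2 (hnn a)).trans hite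
  calc ∑ n ∈ S, netOutflow A g n ≤ ∑ a ∈ A, if a ∈ C then g a else 0 := by
        rw [sum_netOutflow]; exact sum_le_sum hpoint
    _ = ∑ a ∈ A with a ∈ C, g a := sum_filter .. |>.symm
    _ ≤ ∑ a ∈ C, g a :=
      sum_le_sum_of_subset_of_nonneg (fun a ha => (mem_filter.1 ha).2) fun a _ _ => hnn a

theorem IsFlow.le_sum_of_isDicut {A C : Finset (N × N)} {g : N × N → M} {s t : N} {d : M}
    (hg : IsFlow A g s t d) (hnn : ∀ a, 0 ≤ g a) (hC : IsDicut A C s t) :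
    d ≤ ∑ a ∈ C, g a := by
  classical
  set reach := Relation.ReflTransGen (fun u v => (u, v) ∈ A ∧ (u, v) ∉ C) s
  set S := {n ∈ insert s (A.image Prod.snd) | reach n}
  have hs : s ∈ S := mem_filter.2 ⟨mem_insert_self _ _, .refl⟩
  have ht : t ∉ S := fun h => hC.not_reflTransGen (mem_filter.1 h).2
  rw [← hg.sum_netOutflow_eq hs ht]
  refine sum_netOutflow_le_sum hnn fun a ha h1 h2 => ?_
  by_contra haC
  exact h2 (mem_filter.2 ⟨mem_insert_of_mem (mem_image_of_mem _ ha),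
    (mem_filter.1 h1).2.tail ⟨ha, haC⟩⟩)

end Flow

section DoubleCounting

variable {α R : Type*} [DecidableEq α] [NonAssocSemiring R]

theorem sum_sum_inter_eq_sum_card_filter_mem_mul (Γ : Finset (Finset α)) (B : Finset α)
    (w : α → R) : ∑ C ∈ Γ, ∑ a ∈ C ∩ B, w a = ∑ a ∈ B, (#{C ∈ Γ | a ∈ C} : R) * w a := by
  rw [sum_comm' (t' := B) (s' := fun a => {C ∈ Γ | a ∈ C}) fun C a => by
    simp only [mem_inter, mem_filter]; tauto]
  simp only [sum_const, nsmul_eq_mul]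

end DoubleCounting

section FixedCharge

variable {α : Type*} [DecidableEq α]

theorem le_sum_sdiff_add_sum_inter_mul {C F : Finset α} {g y : α → ℝ} {d : ℝ} (hd : 0 ≤ d)
    (hnn : ∀ a, 0 ≤ g a) (hy : ∀ a ∈ F, y a = 0 ∨ y a = 1)
    (hclosed : ∀ a ∈ F, y a = 0 → g a = 0) (hcut : d ≤ ∑ a ∈ C, g a) :
    d ≤ ∑ a ∈ C \ F, g a + ∑ a ∈ C ∩ F, d * y a := by
  have hterm : ∀ a ∈ C ∩ F, 0 ≤ d * y a := fun a ha =>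
    mul_nonneg hd <| by rcases hy a (mem_inter.1 ha).2 with h | h <;> simp [h]
  by_cases hopen : ∃ a ∈ C ∩ F, y a = 1
  · obtain ⟨a, ha, hya⟩ := hopen
    have hsingle : d ≤ ∑ a ∈ C ∩ F, d * y a := by
      simpa [hya] using single_le_sum hterm ha
    linarith [sum_nonneg fun a (_ : a ∈ C \ F) => hnn a]
  · push Not at hopen
    have hzero : ∑ a ∈ C ∩ F, g a = 0 := sum_eq_zero fun a ha =>
      hclosed a (mem_inter.1 ha).2 ((hy a (mem_inter.1 ha).2).resolve_right (hopen a ha))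
    linarith [sum_inter_add_sum_sdiff C F g, sum_nonneg hterm]

theorem card_mul_le_sum_card_filter_mem_mul {Γ : Finset (Finset α)} {A F : Finset α}
    {g y : α → ℝ} {d : ℝ}
    (hΓ : ∀ C ∈ Γ, C ⊆ A ∧ d ≤ ∑ a ∈ C \ F, g a + ∑ a ∈ C ∩ F, d * y a) :
    #Γ * d ≤ ∑ a ∈ A \ F, (#{C ∈ Γ | a ∈ C} : ℝ) * g a
      + ∑ a ∈ F, d * #{C ∈ Γ | a ∈ C} * y a := by
  have hsdiff : ∀ C ∈ Γ, C \ F = C ∩ (A \ F) := fun C hC => by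
    rw [← inter_sdiff_assoc, inter_eq_left.2 (hΓ C hC).1]
  calc (#Γ : ℝ) * d = ∑ C ∈ Γ, d := by rw [sum_const, nsmul_eq_mul]
    _ ≤ ∑ C ∈ Γ, (∑ a ∈ C ∩ (A \ F), g a + ∑ a ∈ C ∩ F, d * y a) :=
      sum_le_sum fun C hC => hsdiff C hC ▸ (hΓ C hC).2
    _ = _ := by
      simp only [sum_add_distrib, sum_sum_inter_eq_sum_card_filter_mem_mul, mul_assoc,
        mul_left_comm (d : ℝ)]

end FixedCharge

theorem dicut_collection_inequality_general
    (N : Type) [DecidableEq N]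
    (A Fc : Finset (N × N))
    (s : N) (T : Finset N)
    (dem : N → ℝ) (hdem : ∀ t ∈ T, 0 ≤ dem t)
    (x y : N × N → ℝ) (f : N → (N × N) → ℝ)
    (hfnn : ∀ t ∈ T, ∀ a : N × N, 0 ≤ f t a)
    (hcons : ∀ t ∈ T, ∀ n : N,
      (∑ a ∈ A.filter (fun a => a.1 = n), f t a)
          - (∑ a ∈ A.filter (fun a => a.2 = n), f t a)
        = if n = s then dem t else if n = t then -dem t else 0)
    (hx : ∀ a : N × N, x a = ∑ t ∈ T, f t a)
    (hy : ∀ a ∈ Fc, y a = 0 ∨ y a = 1)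
    (hfix : ∀ a ∈ Fc, x a ≤ (∑ t ∈ T, dem t) * y a)
    (Γ : N → Finset (Finset (N × N)))
    (hΓ : ∀ t ∈ T, ∀ C ∈ Γ t, C ⊆ A ∧
      ∀ p : List N, List.Chain (fun u v => (u, v) ∈ A) s p →
        (s :: p).getLast (List.cons_ne_nil s p) = t →
        ∃ e ∈ List.zip (s :: p) p, e ∈ C) :
    ∑ a ∈ A \ Fc, ((T.sup (fun t => ((Γ t).filter (fun C => a ∈ C)).card) : ℕ) : ℝ) * x a
      + ∑ a ∈ Fc, ∑ t ∈ T, dem t * (((Γ t).filter (fun C => a ∈ C)).card : ℝ) * y a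
      ≥ ∑ t ∈ T, ((Γ t).card : ℝ) * dem t := by
  have hclosed : ∀ t ∈ T, ∀ a ∈ Fc, y a = 0 → f t a = 0 := fun t ht a ha hya =>
    le_antisymm (calc f t a ≤ x a := hx a ▸ single_le_sum (fun t ht => hfnn t ht a) ht
      _ ≤ 0 := by simpa [hya] using hfix a ha) (hfnn t ht a)
  have hcommodity : ∀ t ∈ T, (#(Γ t) : ℝ) * dem t ≤
      ∑ a ∈ A \ Fc, (#{C ∈ Γ t | a ∈ C} : ℝ) * f t a
        + ∑ a ∈ Fc, dem t * #{C ∈ Γ t | a ∈ C} * y a := fun t ht =>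
    card_mul_le_sum_card_filter_mem_mul fun C hC => ⟨(hΓ t ht C hC).1,
      le_sum_sdiff_add_sum_inter_mul (hdem t ht) (hfnn t ht) hy (hclosed t ht)
        (IsFlow.le_sum_of_isDicut (hcons t ht) (hfnn t ht) (hΓ t ht C hC).2)⟩
  have hsup : ∀ a, ∑ t ∈ T, (#{C ∈ Γ t | a ∈ C} : ℝ) * f t a
      ≤ (T.sup fun t => #{C ∈ Γ t | a ∈ C} : ℕ) * x a := fun a => by
    rw [hx, mul_sum]
    exact sum_le_sum fun t ht => mul_le_mul_of_nonneg_right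
      (by exact_mod_cast le_sup (f := fun t => #{C ∈ Γ t | a ∈ C}) ht) (hfnn t ht a)
  calc ∑ t ∈ T, (#(Γ t) : ℝ) * dem t
        ≤ ∑ t ∈ T, (∑ a ∈ A \ Fc, (#{C ∈ Γ t | a ∈ C} : ℝ) * f t a
          + ∑ a ∈ Fc, dem t * #{C ∈ Γ t | a ∈ C} * y a) := sum_le_sum hcommodity
    _ = ∑ a ∈ A \ Fc, ∑ t ∈ T, (#{C ∈ Γ t | a ∈ C} : ℝ) * f t a
          + ∑ a ∈ Fc, ∑ t ∈ T, dem t * #{C ∈ Γ t | a ∈ C} * y a := by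
      rw [sum_add_distrib, sum_comm, sum_comm (s := T) (t := Fc)]
    _ ≤ _ := by gcongr with a; exact hsup a

/-- Dicut collection inequalities (Rardin–Wolsey) are valid for the uncapacitated
fixed-charge network flow problem. The flow is given per commodity (`f t` routes
`dem t` units from the source `s` to the sink `t`), `x` is the total flow, `Fc` is
the set of fixed-charge arcs, and `Γ t` is a collection of `t`-dicuts (arc sets
meeting every directed `s`–`t` path). -/
theorem dicut_collection_inequality
    (N : Type) [Fintype N] [DecidableEq N]
    (A Fc : Finset (N × N)) (hFc : Fc ⊆ A)
    (s : N) (T : Finset N) (hsT : s ∉ T)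
    (dem : N → ℝ) (hdem : ∀ t ∈ T, 0 ≤ dem t)
    (x y : N × N → ℝ) (f : N → (N × N) → ℝ)
    (hsupp : ∀ t ∈ T, ∀ a : N × N, a ∉ A → f t a = 0)
    (hfnn : ∀ t ∈ T, ∀ a : N × N, 0 ≤ f t a)
    (hcons : ∀ t ∈ T, ∀ n : N,
      (∑ a ∈ A.filter (fun a => a.1 = n), f t a)
          - (∑ a ∈ A.filter (fun a => a.2 = n), f t a)
        = if n = s then dem t else if n = t then -dem t else 0)
    (hx : ∀ a : N × N, x a = ∑ t ∈ T, f t a)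
    (hy : ∀ a ∈ Fc, y a = 0 ∨ y a = 1)
    (hfix : ∀ a ∈ Fc, x a ≤ (∑ t ∈ T, dem t) * y a)
    (Γ : N → Finset (Finset (N × N)))
    (hΓ : ∀ t ∈ T, ∀ C ∈ Γ t, C ⊆ A ∧
      ∀ p : List N, List.Chain (fun u v => (u, v) ∈ A) s p →
        (s :: p).getLast (List.cons_ne_nil s p) = t →
        ∃ e ∈ List.zip (s :: p) p, e ∈ C) :
    ∑ a ∈ A \ Fc, ((T.sup (fun t => ((Γ t).filter (fun C => a ∈ C)).card) : ℕ) : ℝ) * x a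
      + ∑ a ∈ Fc, ∑ t ∈ T, dem t * (((Γ t).filter (fun C => a ∈ C)).card : ℝ) * y a
      ≥ ∑ t ∈ T, ((Γ t).card : ℝ) * dem t :=
  dicut_collection_inequality_general N A Fc s T dem hdem x y f hfnn hcons hx hy hfix Γ hΓ
end

section
/- In the multi-commodity formulation, any feasible solution can be mapped to a feasible solution of the extended three-level formulation 3LF with the same objective value by setting x^{br}_k = Σ_{t=k}^{NT} w^{br}_{kt} and s^{br}_k = Σ_{t=k+1}^{NT} σ^{br}_{kt} for each level b ∈ {0,1,2}, retailer r, and period k; in particular the optimal value of the LP relaxation of MC is at least that of the LP relaxation of 3LF. -/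
/-! Summing the MC balance, setup and nonnegativity constraints of the commodities `t ≥ k`
gives the 3LF constraints of period `k`: the setup bounds `d^r_t y_k` add up to
`d^r_{k,NT} y_k`, and since a commodity is never stocked in its own destination period
(`σ_{tt} = 0`), its stocks aggregate over `t > k` only. Exchanging the order of summation over
`k ≤ t` turns the MC holding cost into the 3LF one. -/

open Finset

/-- Feasibility for the LP relaxation of the multi-commodity formulation MC. -/
def MCFeasLP (I : LSData) (p : MCPoint I) : Prop :=
  (∀ r, ∀ t ∈ Icc 1 I.NT, p.sg0 r 0 t = 0 ∧ p.sg1 r 0 t = 0 ∧ p.sg2 r 0 t = 0) ∧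
  (∀ r, ∀ t ∈ Icc 1 I.NT, p.sg0 r t t = 0 ∧ p.sg1 r t t = 0 ∧ p.sg2 r t t = 0) ∧
  (∀ r, ∀ t ∈ Icc 1 I.NT, ∀ k ∈ Icc 1 t,
    p.sg0 r (k - 1) t + p.w0 r k t = p.w1 r k t + p.sg0 r k t) ∧
  (∀ r, ∀ t ∈ Icc 1 I.NT, ∀ k ∈ Icc 1 t,
    p.sg1 r (k - 1) t + p.w1 r k t = p.w2 r k t + p.sg1 r k t) ∧
  (∀ r, ∀ t ∈ Icc 1 I.NT, ∀ k ∈ Icc 1 t,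
    p.sg2 r (k - 1) t + p.w2 r k t = if k = t then I.d r t else p.sg2 r k t) ∧
  (∀ r, ∀ t ∈ Icc 1 I.NT, ∀ k ∈ Icc 1 t, p.w0 r k t ≤ I.d r t * p.yP k) ∧
  (∀ r, ∀ t ∈ Icc 1 I.NT, ∀ k ∈ Icc 1 t, p.w1 r k t ≤ I.d r t * p.yW (I.wOf r) k) ∧
  (∀ r, ∀ t ∈ Icc 1 I.NT, ∀ k ∈ Icc 1 t, p.w2 r k t ≤ I.d r t * p.yR r k) ∧
  (∀ r, ∀ t ∈ Icc 1 I.NT, ∀ k ∈ Icc 1 t,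
    0 ≤ p.w0 r k t ∧ 0 ≤ p.w1 r k t ∧ 0 ≤ p.w2 r k t ∧
    0 ≤ p.sg0 r k t ∧ 0 ≤ p.sg1 r k t ∧ 0 ≤ p.sg2 r k t) ∧
  (∀ t ∈ Icc 1 I.NT, 0 ≤ p.yP t ∧ p.yP t ≤ 1) ∧
  (∀ w, ∀ t ∈ Icc 1 I.NT, 0 ≤ p.yW w t ∧ p.yW w t ≤ 1) ∧
  (∀ r, ∀ t ∈ Icc 1 I.NT, 0 ≤ p.yR r t ∧ p.yR r t ≤ 1)

/-- Objective function of the MC formulation. -/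
def MCObj (I : LSData) (p : MCPoint I) : ℝ :=
  (∑ t ∈ Icc 1 I.NT,
    (I.scP t * p.yP t + (∑ w, I.scW w t * p.yW w t) + (∑ r, I.scR r t * p.yR r t)))
  + ∑ r, ∑ t ∈ Icc 1 I.NT, ∑ k ∈ Icc 1 t,
      (I.hcP k * p.sg0 r k t + I.hcW (I.wOf r) k * p.sg1 r k t + I.hcR r k * p.sg2 r k t)

/-- The mapping `x^{br}_k = Σ_{t=k}^{NT} w^{br}_{kt}`, `s^{br}_k = Σ_{t=k+1}^{NT} σ^{br}_{kt}`. -/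
def MCtoTLF (I : LSData) (p : MCPoint I) : TLFPoint I :=
  ⟨fun r k => ∑ t ∈ Icc k I.NT, p.w0 r k t,
   fun r k => ∑ t ∈ Icc k I.NT, p.w1 r k t,
   fun r k => ∑ t ∈ Icc k I.NT, p.w2 r k t,
   fun r k => ∑ t ∈ Icc (k + 1) I.NT, p.sg0 r k t,
   fun r k => ∑ t ∈ Icc (k + 1) I.NT, p.sg1 r k t,
   fun r k => ∑ t ∈ Icc (k + 1) I.NT, p.sg2 r k t,
   p.yP, p.yW, p.yR⟩

section Aggregation

variable {M : Type*} [AddCommMonoid M]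

lemma sum_Icc_eq_sum_Icc_succ_of_eq_zero {f : ℕ → M} {k : ℕ} (N : ℕ) (hf : f k = 0) :
    ∑ t ∈ Icc k N, f t = ∑ t ∈ Icc (k + 1) N, f t := by
  rw [Icc_add_one_left_eq_Ioc]
  rcases le_or_gt k N with hk | hk
  · rw [← add_sum_Ioc_eq_sum_Icc hk, hf, zero_add]
  · simp [Icc_eq_empty_of_lt hk, Ioc_eq_empty_of_le hk.le]

def aggFlow (N : ℕ) (w : ℕ → ℕ → M) (k : ℕ) : M := ∑ t ∈ Icc k N, w k t

def aggStock (N : ℕ) (σ : ℕ → ℕ → M) (k : ℕ) : M := ∑ t ∈ Icc (k + 1) N, σ k t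

lemma aggStock_zero {N : ℕ} {σ : ℕ → ℕ → M} (h : ∀ t ∈ Icc 1 N, σ 0 t = 0) :
    aggStock N σ 0 = 0 :=
  sum_eq_zero h

lemma aggStock_pred_add_aggFlow {N k : ℕ} {σ win wout : ℕ → ℕ → M} (hk : k ∈ Icc 1 N)
    (hσ : σ k k = 0)
    (hbal : ∀ t ∈ Icc 1 N, ∀ k ∈ Icc 1 t, σ (k - 1) t + win k t = wout k t + σ k t) :
    aggStock N σ (k - 1) + aggFlow N win k = aggFlow N wout k + aggStock N σ k := by
  rw [mem_Icc] at hk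
  unfold aggStock aggFlow
  rw [Nat.sub_add_cancel hk.1, ← sum_Icc_eq_sum_Icc_succ_of_eq_zero N hσ,
    ← sum_add_distrib, ← sum_add_distrib]
  refine sum_congr rfl fun t ht => hbal t ?_ k ?_ <;> simp only [mem_Icc] at ht ⊢ <;> omega

lemma sum_Icc_sum_Icc_mul_eq_sum_mul_aggStock {R : Type*} [NonUnitalNonAssocSemiring R]
    {N : ℕ} (hc : ℕ → R) {σ : ℕ → ℕ → R} (hσ : ∀ k ∈ Icc 1 N, σ k k = 0) :
    ∑ t ∈ Icc 1 N, ∑ k ∈ Icc 1 t, hc k * σ k t = ∑ k ∈ Icc 1 N, hc k * aggStock N σ k := by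
  rw [sum_comm' (t' := Icc 1 N) (s' := fun k => Icc k N)
    (fun _ _ => by simp only [mem_Icc]; omega)]
  refine sum_congr rfl fun k hk => ?_
  rw [aggStock, mul_sum]
  exact sum_Icc_eq_sum_Icc_succ_of_eq_zero N (by rw [hσ k hk, mul_zero])

lemma balance_demand_as_outflow {N : ℕ} {σ w : ℕ → ℕ → M} {d : ℕ → M}
    (hσ : ∀ t ∈ Icc 1 N, σ t t = 0)
    (hbal : ∀ t ∈ Icc 1 N, ∀ k ∈ Icc 1 t, σ (k - 1) t + w k t = if k = t then d t else σ k t) :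
    ∀ t ∈ Icc 1 N, ∀ k ∈ Icc 1 t,
      σ (k - 1) t + w k t = (if k = t then d t else 0) + σ k t := by
  intro t ht k hk
  rw [hbal t ht k hk]
  split_ifs with hkt
  · rw [hkt, hσ t ht, add_zero]
  · rw [zero_add]

lemma aggFlow_demand {N k : ℕ} (d : ℕ → M) (hk : k ∈ Icc 1 N) :
    aggFlow N (fun j t => if j = t then d t else 0) k = d k := by
  rw [aggFlow, sum_ite_eq, if_pos (by simp only [mem_Icc] at hk ⊢; omega)]

end Aggregation

section OrderedAggregation

variable {R : Type*} [Semiring R] [PartialOrder R] [IsOrderedAddMonoid R]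

lemma aggFlow_le_sum_mul {N k : ℕ} {w : ℕ → ℕ → R} {d y : ℕ → R} (hk : k ∈ Icc 1 N)
    (h : ∀ t ∈ Icc 1 N, ∀ k ∈ Icc 1 t, w k t ≤ d t * y k) :
    aggFlow N w k ≤ (∑ t ∈ Icc k N, d t) * y k := by
  rw [aggFlow, sum_mul]
  refine sum_le_sum fun t ht => h t ?_ k ?_ <;> simp only [mem_Icc] at hk ht ⊢ <;> omega

lemma aggFlow_nonneg {N k : ℕ} {w : ℕ → ℕ → R} (hk : k ∈ Icc 1 N)
    (h : ∀ t ∈ Icc 1 N, ∀ k ∈ Icc 1 t, 0 ≤ w k t) : 0 ≤ aggFlow N w k :=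
  sum_nonneg fun t ht => h t (by simp only [mem_Icc] at hk ht ⊢; omega) k
    (by simp only [mem_Icc] at hk ht ⊢; omega)

lemma aggStock_nonneg {N k : ℕ} {σ : ℕ → ℕ → R} (hk : k ∈ Icc 1 N)
    (h : ∀ t ∈ Icc 1 N, ∀ k ∈ Icc 1 t, 0 ≤ σ k t) : 0 ≤ aggStock N σ k :=
  sum_nonneg fun t ht => h t (by simp only [mem_Icc] at hk ht ⊢; omega) k
    (by simp only [mem_Icc] at hk ht ⊢; omega)

end OrderedAggregation

lemma MCtoTLF_feasLP {I : LSData} {p : MCPoint I} (hp : MCFeasLP I p) :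
    TLFFeasLP I (MCtoTLF I p) := by
  obtain ⟨hσ0, hσdiag, hbal0, hbal1, hbal2, hsetP, hsetW, hsetR, hnn, hyP, hyW, hyR⟩ := hp
  refine ⟨fun r => ⟨aggStock_zero fun t ht => (hσ0 r t ht).1,
      aggStock_zero fun t ht => (hσ0 r t ht).2.1, aggStock_zero fun t ht => (hσ0 r t ht).2.2⟩,
    fun r k hk => aggStock_pred_add_aggFlow hk (hσdiag r k hk).1 (hbal0 r),
    fun r k hk => aggStock_pred_add_aggFlow hk (hσdiag r k hk).2.1 (hbal1 r),
    fun r k hk => ?_,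
    fun r k hk => aggFlow_le_sum_mul hk (hsetP r),
    fun r k hk => aggFlow_le_sum_mul hk (hsetW r),
    fun r k hk => aggFlow_le_sum_mul hk (hsetR r),
    fun r k hk => ⟨aggFlow_nonneg hk fun t ht k hk => (hnn r t ht k hk).1,
      aggFlow_nonneg hk fun t ht k hk => (hnn r t ht k hk).2.1,
      aggFlow_nonneg hk fun t ht k hk => (hnn r t ht k hk).2.2.1,
      aggStock_nonneg hk fun t ht k hk => (hnn r t ht k hk).2.2.2.1,
      aggStock_nonneg hk fun t ht k hk => (hnn r t ht k hk).2.2.2.2.1,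
      aggStock_nonneg hk fun t ht k hk => (hnn r t ht k hk).2.2.2.2.2⟩,
    hyP, hyW, hyR⟩
  have h := aggStock_pred_add_aggFlow hk (hσdiag r k hk).2.2
    (balance_demand_as_outflow (fun t ht => (hσdiag r t ht).2.2) (hbal2 r))
  rwa [aggFlow_demand _ hk] at h

lemma TLFObj_MCtoTLF {I : LSData} {p : MCPoint I} (hp : MCFeasLP I p) :
    TLFObj I (MCtoTLF I p) = MCObj I p := by
  have hσdiag := hp.2.1
  simp only [MCObj, TLFObj, sum_add_distrib, sum_comm (s := Icc 1 I.NT) (t := univ)]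
  simp only [sum_Icc_sum_Icc_mul_eq_sum_mul_aggStock _ fun k hk => (hσdiag _ k hk).1,
    sum_Icc_sum_Icc_mul_eq_sum_mul_aggStock _ fun k hk => (hσdiag _ k hk).2.1,
    sum_Icc_sum_Icc_mul_eq_sum_mul_aggStock _ fun k hk => (hσdiag _ k hk).2.2]
  simp only [MCtoTLF, aggStock]
  ring

/-- Every feasible MC solution maps to a feasible 3LF solution with the same
objective value; in particular the optimal value of the LP relaxation of MC is at
least that of the LP relaxation of 3LF. -/
theorem mc_maps_to_3lf (I : LSData)
    (hT : {v : ℝ | ∃ p : MCPoint I, MCFeasLP I p ∧ v = MCObj I p}.Nonempty)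
    (hS : BddBelow {v : ℝ | ∃ q : TLFPoint I, TLFFeasLP I q ∧ v = TLFObj I q}) :
    (∀ p : MCPoint I, MCFeasLP I p →
      TLFFeasLP I (MCtoTLF I p) ∧ TLFObj I (MCtoTLF I p) = MCObj I p) ∧
    sInf {v : ℝ | ∃ q : TLFPoint I, TLFFeasLP I q ∧ v = TLFObj I q}
      ≤ sInf {v : ℝ | ∃ p : MCPoint I, MCFeasLP I p ∧ v = MCObj I p} := by
  refine ⟨fun p hp => ⟨MCtoTLF_feasLP hp, TLFObj_MCtoTLF hp⟩, csInf_le_csInf hS hT ?_⟩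
  rintro v ⟨p, hp, rfl⟩
  exact ⟨MCtoTLF I p, MCtoTLF_feasLP hp, (TLFObj_MCtoTLF hp).symm⟩
end
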